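/- arXiv:2205.01834 — 9 statements merged into one kernel-verified Lean document; each statement's English description precedes it below -/
import Mathlib

section
/- Let P be a (3+1)-free poset, and let G be a bipartite graph whose vertex set is the disjoint union of two chains A and B of P, with an edge between a ∈ A and b ∈ B iff a and b are incomparable in P. Then every vertex of G has degree at most 2. -/
/-- Two elements of a poset are incomparable. -/
def Incomp {α : Type*} [Preorder α] (x y : α) : Prop := ¬ x ≤ y ∧ ¬ y ≤ x

/-- A poset is (3+1)-free. -/
def ThreePlusOneFree (α : Type*) [Preorder α] : Prop :=
  ¬ ∃ a b c d : α, a < b ∧ b < c ∧ Incomp d a ∧ Incomp d b ∧ Incomp d c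

private lemma chain_incomp_le_two {α : Type*} [PartialOrder α] [Fintype α]
    (h31 : ThreePlusOneFree α) (C : Set α) (hC : IsChain (· ≤ ·) C) (d : α) :
    {c ∈ C | Incomp d c}.ncard ≤ 2 := by
  by_contra h
  push_neg at h
  rw [Set.two_lt_ncard (Set.toFinite _)] at h
  obtain ⟨x, hx, y, hy, z, hz, hxy, hxz, hyz⟩ := h
  -- order x,y,z by the chain
  have key : ∀ u v w : α, u ∈ C → v ∈ C → w ∈ C → u < v → v < w →
      Incomp d u → Incomp d v → Incomp d w → False := by
    intro u v w _ _ _ huv hvw iu iv iw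
    exact h31 ⟨u, v, w, d, huv, hvw, iu, iv, iw⟩
  have hcmp : ∀ u v : α, u ∈ C → v ∈ C → u ≠ v → u < v ∨ v < u := by
    intro u v hu hv huv
    rcases hC hu hv huv with h | h
    · exact Or.inl (lt_of_le_of_ne h huv)
    · exact Or.inr (lt_of_le_of_ne h huv.symm)
  obtain ⟨hxC, hxI⟩ := hx
  obtain ⟨hyC, hyI⟩ := hy
  obtain ⟨hzC, hzI⟩ := hz
  rcases hcmp x y hxC hyC hxy with h1 | h1 <;>
  rcases hcmp y z hyC hzC hyz with h2 | h2 <;>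
  rcases hcmp x z hxC hzC hxz with h3 | h3
  · exact key x y z hxC hyC hzC h1 h2 hxI hyI hzI
  · exact absurd (h1.trans h2) h3.asymm
  · exact key x z y hxC hzC hyC h3 h2 hxI hzI hyI
  · exact key z x y hzC hxC hyC h3 h1 hzI hxI hyI
  · exact key y x z hyC hxC hzC h1 h3 hyI hxI hzI
  · exact key y z x hyC hzC hxC h2 h3 hyI hzI hxI
  · exact absurd (h2.trans h1) h3.asymm
  · exact key z y x hzC hyC hxC h2 h1 hzI hyI hxI

/-- In the bipartite incomparability graph between two disjoint chains `A` and `B` of a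
(3+1)-free poset, every vertex has degree at most 2. -/
theorem stmt_5 {α : Type*} [PartialOrder α] [Fintype α] (h31 : ThreePlusOneFree α)
    (A B : Set α) (hA : IsChain (· ≤ ·) A) (hB : IsChain (· ≤ ·) B)
    (hAB : Disjoint A B) :
    (∀ a ∈ A, {b ∈ B | Incomp a b}.ncard ≤ 2) ∧
    (∀ b ∈ B, {a ∈ A | Incomp a b}.ncard ≤ 2) := by
  constructor
  · intro a _
    exact chain_incomp_le_two h31 B hB a
  · intro b _
    have := chain_incomp_le_two h31 A hA b
    have hset : {a ∈ A | Incomp a b} = {c ∈ A | Incomp b c} := by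
      ext c; simp [Incomp, and_comm]
    rw [hset]
    exact this
end

section
/- Let P be a finite poset. The map sending a P-array A = {A_{i,j}} to the coloring κ: P → ℤ₊ with κ(A_{i,j}) = i is a bijection between P-arrays and proper colorings of the incomparability graph inc(P). -/
/-- A `P`-array: an indexing of the elements of `P` by positions `(i,j)` (rows and
columns, indexed from 0) in which every element appears exactly once and each row
is increasing from left to right with no gaps. -/
structure PArray (P : Type*) [PartialOrder P] where
  entry : ℕ → ℕ → Option P
  exists_unique : ∀ x : P, ∃! ij : ℕ × ℕ, entry ij.1 ij.2 = some x
  row_chain : ∀ i j x, entry i (j + 1) = some x → ∃ y, entry i j = some y ∧ y < x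

open Finset

namespace PArray

variable {P : Type*} [PartialOrder P] (A : PArray P)

lemma ext_entry {A B : PArray P} (h : A.entry = B.entry) : A = B := by
  cases A; cases B; cases h; rfl

lemma exists_entry_lt_of_lt {i j k : ℕ} {x : P} (hx : A.entry i j = some x) (hk : k < j) :
    ∃ y, A.entry i k = some y ∧ y < x := by
  induction j generalizing x with
  | zero => omega
  | succ j ih =>
    obtain ⟨z, hz, hzx⟩ := A.row_chain i j x hx
    rcases (Nat.lt_succ_iff.mp hk).eq_or_lt with rfl | hk
    · exact ⟨z, hz, hzx⟩
    · obtain ⟨y, hy, hyz⟩ := ih hz hk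
      exact ⟨y, hy, hyz.trans hzx⟩

lemma lt_of_entry_of_lt {i j k : ℕ} {x y : P} (hy : A.entry i k = some y)
    (hx : A.entry i j = some x) (hk : k < j) : y < x := by
  obtain ⟨y', hy', hlt⟩ := A.exists_entry_lt_of_lt hx hk
  obtain rfl : y = y' := Option.some_injective _ (hy.symm.trans hy')
  exact hlt

noncomputable def row (x : P) : ℕ := (A.exists_unique x).choose.1

noncomputable def col (x : P) : ℕ := (A.exists_unique x).choose.2

lemma entry_eq_some_iff {i j : ℕ} {x : P} :
    A.entry i j = some x ↔ A.row x = i ∧ A.col x = j := by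
  obtain ⟨hpos, huniq⟩ := (A.exists_unique x).choose_spec
  constructor
  · intro h
    rw [row, col, ← huniq (i, j) h]
    exact ⟨rfl, rfl⟩
  · rintro ⟨rfl, rfl⟩
    exact hpos

lemma entry_row_col (x : P) : A.entry (A.row x) (A.col x) = some x :=
  A.entry_eq_some_iff.2 ⟨rfl, rfl⟩

lemma eq_of_row_eq_of_col_eq {u v : P} (hr : A.row u = A.row v) (hc : A.col u = A.col v) :
    u = v := by
  have hv := A.entry_row_col v
  rw [← hr, ← hc, A.entry_row_col u] at hv
  exact Option.some_injective _ hv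

lemma col_lt_col_iff {u v : P} (h : A.row u = A.row v) : A.col u < A.col v ↔ u < v := by
  have hu := A.entry_row_col u
  have hv := A.entry_row_col v
  rw [h] at hu
  refine ⟨A.lt_of_entry_of_lt hu hv, fun huv => ?_⟩
  rcases lt_trichotomy (A.col u) (A.col v) with hc | hc | hc
  · exact hc
  · exact absurd (A.eq_of_row_eq_of_col_eq h hc) huv.ne
  · exact absurd (A.lt_of_entry_of_lt hv hu hc) huv.not_gt

lemma le_or_le_of_row_eq {u v : P} (h : A.row u = A.row v) : u ≤ v ∨ v ≤ u := by
  rcases lt_trichotomy (A.col u) (A.col v) with hc | hc | hc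
  · exact .inl ((A.col_lt_col_iff h).1 hc).le
  · exact .inl (A.eq_of_row_eq_of_col_eq h hc).le
  · exact .inr ((A.col_lt_col_iff h.symm).1 hc).le

lemma row_ne_of_incomp : ∀ u v : P, Incomp u v → A.row u ≠ A.row v :=
  fun _ _ huv h => (A.le_or_le_of_row_eq h).elim huv.1 huv.2

end PArray

section ColorRank

variable {P : Type*} [PartialOrder P] {κ : P → ℕ}

lemma le_or_le_of_color_eq (hκ : ∀ u v : P, Incomp u v → κ u ≠ κ v) {u v : P} (h : κ u = κ v) :
    u ≤ v ∨ v ≤ u := by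
  by_contra! hc
  exact hκ u v ⟨hc.1, hc.2⟩ h

variable [Fintype P]

open scoped Classical in
/-- The column that `x` occupies in the `P`-array of the colouring `κ`. -/
noncomputable def colorRank (κ : P → ℕ) (x : P) : ℕ := #{y | κ y = κ x ∧ y < x}

lemma colorRank_lt_colorRank {u v : P} (h : κ u = κ v) (huv : u < v) :
    colorRank κ u < colorRank κ v := by
  refine card_lt_card ((ssubset_iff_of_subset fun y hy => ?_).2 ⟨u, ?_, ?_⟩)
  · simp only [mem_filter, mem_univ, true_and] at hy ⊢
    exact ⟨hy.1.trans h, hy.2.trans huv⟩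
  · simpa using ⟨h, huv⟩
  · simp

variable (hκ : ∀ u v : P, Incomp u v → κ u ≠ κ v)
include hκ

lemma eq_of_colorRank_eq {u v : P} (h : κ u = κ v) (hr : colorRank κ u = colorRank κ v) :
    u = v := by
  rcases le_or_le_of_color_eq hκ h with huv | hvu
  · exact huv.eq_of_not_lt fun hlt => (colorRank_lt_colorRank h hlt).ne hr
  · exact (hvu.eq_of_not_lt fun hlt => (colorRank_lt_colorRank h.symm hlt).ne hr.symm).symm

/-- The ranks of the elements below `x` in its colour class are distinct and smaller than
`colorRank κ x`, and there are `colorRank κ x` of them, so they fill up `range (colorRank κ x)`. -/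
lemma exists_colorRank_eq {x : P} {j : ℕ} (hj : j < colorRank κ x) :
    ∃ y, κ y = κ x ∧ y < x ∧ colorRank κ y = j := by
  classical
  set below : Finset P := {y | κ y = κ x ∧ y < x}
  have hmem {y : P} : y ∈ below ↔ κ y = κ x ∧ y < x := by simp [below]
  have hcard : #below = colorRank κ x := by simp only [below, colorRank]
  obtain ⟨y, hy, hyj⟩ := surj_on_of_inj_on_of_card_le (s := below) (t := range (colorRank κ x))
    (fun y _ => colorRank κ y)
    (fun y hy => mem_range.2 (colorRank_lt_colorRank (hmem.1 hy).1 (hmem.1 hy).2))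
    (fun y₁ y₂ hy₁ hy₂ h => eq_of_colorRank_eq hκ ((hmem.1 hy₁).1.trans (hmem.1 hy₂).1.symm) h)
    (by rw [card_range, hcard]) j (mem_range.2 hj)
  exact ⟨y, (hmem.1 hy).1, (hmem.1 hy).2, hyj.symm⟩

end ColorRank

namespace PArray

variable {P : Type*} [PartialOrder P] [Fintype P] {κ : P → ℕ}

open scoped Classical in
noncomputable def coloringEntry (κ : P → ℕ) (i j : ℕ) : Option P :=
  if h : ∃ x, κ x = i ∧ colorRank κ x = j then some h.choose else none

lemma coloringEntry_eq_some_iff (hκ : ∀ u v : P, Incomp u v → κ u ≠ κ v) {i j : ℕ} {x : P} :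
    coloringEntry κ i j = some x ↔ κ x = i ∧ colorRank κ x = j := by
  unfold coloringEntry
  constructor
  · intro hx
    split_ifs at hx with h
    rw [← Option.some_injective _ hx]
    exact h.choose_spec
  · rintro ⟨rfl, rfl⟩
    have h : ∃ y, κ y = κ x ∧ colorRank κ y = colorRank κ x := ⟨x, rfl, rfl⟩
    rw [dif_pos h]
    exact congrArg some (eq_of_colorRank_eq hκ h.choose_spec.1 h.choose_spec.2)

noncomputable def ofColoring (κ : P → ℕ) (hκ : ∀ u v : P, Incomp u v → κ u ≠ κ v) :
    PArray P where
  entry := coloringEntry κ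
  exists_unique x := by
    refine ⟨(κ x, colorRank κ x), (coloringEntry_eq_some_iff hκ).2 ⟨rfl, rfl⟩, ?_⟩
    rintro ⟨i, j⟩ h
    obtain ⟨rfl, rfl⟩ := (coloringEntry_eq_some_iff hκ).1 h
    rfl
  row_chain i j x hx := by
    obtain ⟨rfl, hj⟩ := (coloringEntry_eq_some_iff hκ).1 hx
    obtain ⟨y, hy, hyx, hyj⟩ := exists_colorRank_eq hκ (by omega : j < colorRank κ x)
    exact ⟨y, (coloringEntry_eq_some_iff hκ).2 ⟨hy, hyj⟩, hyx⟩

lemma row_ofColoring (hκ : ∀ u v : P, Incomp u v → κ u ≠ κ v) :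
    (ofColoring κ hκ).row = κ :=
  funext fun _ => ((entry_eq_some_iff _).1 ((coloringEntry_eq_some_iff hκ).2 ⟨rfl, rfl⟩)).1

lemma colorRank_row (A : PArray P) (x : P) : colorRank A.row x = A.col x := by
  classical
  rw [← card_range (A.col x), colorRank]
  refine card_nbij A.col (fun y hy => ?_) (fun y₁ hy₁ y₂ hy₂ h => ?_) (fun k hk => ?_)
  · simp only [coe_filter, mem_univ, true_and, Set.mem_ofPred_eq] at hy
    exact mem_range.2 ((A.col_lt_col_iff hy.1).2 hy.2)
  · simp only [coe_filter, mem_univ, true_and, Set.mem_ofPred_eq] at hy₁ hy₂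
    exact A.eq_of_row_eq_of_col_eq (hy₁.1.trans hy₂.1.symm) h
  · obtain ⟨y, hy, hyx⟩ := A.exists_entry_lt_of_lt (A.entry_row_col x) (mem_range.1 hk)
    obtain ⟨hrow, hcol⟩ := A.entry_eq_some_iff.1 hy
    exact ⟨y, by simpa using ⟨hrow, hyx⟩, hcol⟩

lemma ofColoring_row (A : PArray P) : ofColoring A.row A.row_ne_of_incomp = A := by
  refine ext_entry (funext₂ fun i j => Option.ext fun x => ?_)
  change coloringEntry A.row i j = some x ↔ A.entry i j = some x
  rw [coloringEntry_eq_some_iff A.row_ne_of_incomp, colorRank_row, A.entry_eq_some_iff]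

noncomputable def equivProperColoring :
    PArray P ≃ {κ : P → ℕ // ∀ u v : P, Incomp u v → κ u ≠ κ v} where
  toFun A := ⟨A.row, A.row_ne_of_incomp⟩
  invFun κ := ofColoring κ.1 κ.2
  left_inv := ofColoring_row
  right_inv κ := Subtype.ext (row_ofColoring κ.2)

end PArray

/-- The map sending a `P`-array to the coloring assigning to each element its row index
is a bijection between `P`-arrays and proper colorings of the incomparability graph. -/
theorem stmt_6 {P : Type*} [PartialOrder P] [Fintype P] :
    ∃ e : PArray P ≃ {κ : P → ℕ // ∀ u v : P, Incomp u v → κ u ≠ κ v},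
      ∀ (A : PArray P) (i j : ℕ) (x : P), A.entry i j = some x → (e A).1 x = i :=
  ⟨PArray.equivProperColoring, fun A _ _ _ h => (A.entry_eq_some_iff.1 h).1⟩
end

section
/- Let P be a finite poset and T a P-tableau. Then the weight of T is a partition: for all i ≥ 1, the number of entries in row i of T is at least the number of entries in row i+1. -/
/-- The weight of a `P`-tableau is a partition: each row is at least as long as the
next.  (The `P`-tableau condition: each entry not in the first row has an entry
directly above it which is not greater than it.) -/
theorem stmt_7 {P : Type*} [PartialOrder P] [Fintype P] (T : PArray P)
    (htab : ∀ i j x, T.entry (i + 1) j = some x →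
      ∃ y, T.entry i j = some y ∧ ¬ x < y) :
    ∀ i, {j | (T.entry (i + 1) j).isSome}.ncard ≤ {j | (T.entry i j).isSome}.ncard := by
  intro i
  have hsub : {j | (T.entry (i + 1) j).isSome} ⊆ {j | (T.entry i j).isSome} := by
    intro j hj
    obtain ⟨x, hx⟩ := Option.isSome_iff_exists.mp hj
    obtain ⟨y, hy, -⟩ := htab i j x hx
    simp [Set.mem_setOf_eq, hy]
  have hinj : Set.InjOn (fun j => T.entry i j) {j | (T.entry i j).isSome} := by
    intro a ha b hb hab
    obtain ⟨x, hx⟩ := Option.isSome_iff_exists.mp ha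
    obtain ⟨u, _, hu2⟩ := T.exists_unique x
    have h1 := hu2 (i, a) hx
    have h2 := hu2 (i, b) (by simp only [Set.mem_setOf_eq] at *; rw [← hab]; exact hx)
    exact congrArg Prod.snd (h1.trans h2.symm)
  have hfin : {j | (T.entry i j).isSome}.Finite :=
    Set.Finite.of_finite_image (Set.toFinite _) hinj
  exact Set.ncard_le_ncard hsub hfin
end

section
/- Let D be a finite subset of ℤ₊ × ℤ₊ (a diagram) and r ≥ 1. Define the raising operator e_r: if every cell in row r+1 of D is r-paired then e_r(D) = 0; otherwise e_r moves the rightmost non-r-paired cell (r+1,c) of row r+1 to (r,c). Define f_r symmetrically on row r (moving the leftmost non-r-paired cell of row r down). Then for diagrams D, D': e_r(D) = D' if and only if f_r(D') = D. -/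
/-- The balance of rows `r+1` versus `r` of the diagram `D` over the columns `≤ c`. -/
def bal (D : Finset (ℕ × ℕ)) (r c : ℕ) : ℤ :=
  ((D.filter fun p => p.1 = r + 1 ∧ p.2 ≤ c).card : ℤ) -
    ((D.filter fun p => p.1 = r ∧ p.2 ≤ c).card : ℤ)

/-- The balance of rows `r` versus `r+1` of the diagram `D` over the columns `≥ c`. -/
def cobal (D : Finset (ℕ × ℕ)) (r c : ℕ) : ℤ :=
  ((D.filter fun p => p.1 = r ∧ c ≤ p.2).card : ℤ) -
    ((D.filter fun p => p.1 = r + 1 ∧ c ≤ p.2).card : ℤ)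

/-- The cell `(r+1, c)` belongs to `D` and is *not* `r`-paired.  (A cell of row `r+1`
is unpaired in the iterative pairing procedure exactly when its prefix balance
strictly exceeds all earlier prefix balances.) -/
def UnpairedLow (D : Finset (ℕ × ℕ)) (r c : ℕ) : Prop :=
  (r + 1, c) ∈ D ∧ 0 < bal D r c ∧ ∀ c' < c, bal D r c' < bal D r c

/-- The cell `(r, c)` belongs to `D` and is *not* `r`-paired. -/
def UnpairedHigh (D : Finset (ℕ × ℕ)) (r c : ℕ) : Prop :=
  (r, c) ∈ D ∧ 0 < cobal D r c ∧ ∀ c' > c, cobal D r c' < cobal D r c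

/-- `ERel D r D'` means `e_r(D) = D'`: the rightmost non-`r`-paired cell of row `r+1`
is moved up to row `r`. -/
def ERel (D : Finset (ℕ × ℕ)) (r : ℕ) (D' : Finset (ℕ × ℕ)) : Prop :=
  ∃ c, UnpairedLow D r c ∧ (∀ c', UnpairedLow D r c' → c' ≤ c) ∧
    D' = insert (r, c) (D.erase (r + 1, c))

/-- `FRel D r D'` means `f_r(D) = D'`: the leftmost non-`r`-paired cell of row `r`
is moved down to row `r+1`. -/
def FRel (D : Finset (ℕ × ℕ)) (r : ℕ) (D' : Finset (ℕ × ℕ)) : Prop :=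
  ∃ c, UnpairedHigh D r c ∧ (∀ c', UnpairedHigh D r c' → c ≤ c') ∧
    D' = insert (r + 1, c) (D.erase (r, c))

namespace Stmt8

open Finset

lemma card_move {D : Finset (ℕ × ℕ)} {x y : ℕ × ℕ} (hxy : x ≠ y) (hy : y ∈ D)
    (hx : x ∉ D) (P : ℕ × ℕ → Prop) [DecidablePred P] :
    (((insert x (D.erase y)).filter P).card : ℤ)
      = ((D.filter P).card : ℤ) + (if P x then 1 else 0) - (if P y then 1 else 0) := by
  rw [filter_insert, filter_erase]
  have hxf : x ∉ (D.filter P).erase y := fun h => hx (mem_of_mem_filter _ (mem_of_mem_erase h))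
  by_cases hPx : P x <;> by_cases hPy : P y
  · rw [if_pos hPx, if_pos hPx, if_pos hPy, card_insert_of_notMem hxf,
      card_erase_of_mem (mem_filter.mpr ⟨hy, hPy⟩)]
    have h1 : 0 < (D.filter P).card := card_pos.mpr ⟨y, mem_filter.mpr ⟨hy, hPy⟩⟩
    omega
  · rw [if_pos hPx, if_pos hPx, if_neg hPy,
      erase_eq_of_notMem (fun h => hPy (mem_filter.mp h).2),
      card_insert_of_notMem (fun h => hx (mem_of_mem_filter _ h))]
    omega
  · rw [if_neg hPx, if_neg hPx, if_pos hPy,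
      card_erase_of_mem (mem_filter.mpr ⟨hy, hPy⟩)]
    have h1 : 0 < (D.filter P).card := card_pos.mpr ⟨y, mem_filter.mpr ⟨hy, hPy⟩⟩
    omega
  · rw [if_neg hPx, if_neg hPx, if_neg hPy,
      erase_eq_of_notMem (fun h => hPy (mem_filter.mp h).2)]
    omega

lemma card_le_succ (D : Finset (ℕ × ℕ)) (a c : ℕ) :
    (D.filter fun p => p.1 = a ∧ p.2 ≤ c + 1).card
      = (D.filter fun p => p.1 = a ∧ p.2 ≤ c).card + (if (a, c + 1) ∈ D then 1 else 0) := by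
  have hdis : Disjoint (D.filter fun p => p.1 = a ∧ p.2 ≤ c)
      (D.filter (fun p => p = (a, c + 1))) := by
    simp only [disjoint_left, mem_filter]
    rintro p ⟨hp, h1, h2⟩ ⟨hp2, hpe⟩
    subst hpe
    exact Nat.not_succ_le_self c h2
  have hu : (D.filter fun p => p.1 = a ∧ p.2 ≤ c + 1)
      = (D.filter fun p => p.1 = a ∧ p.2 ≤ c) ∪ D.filter (fun p => p = (a, c + 1)) := by
    ext p
    simp only [mem_filter, mem_union, Prod.ext_iff]
    by_cases hp : p ∈ D <;> simp [hp]
    omega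
  rw [hu, card_union_of_disjoint hdis, filter_eq']
  split_ifs <;> simp

lemma card_ge_pred (D : Finset (ℕ × ℕ)) (a c : ℕ) :
    (D.filter fun p => p.1 = a ∧ c ≤ p.2).card
      = (D.filter fun p => p.1 = a ∧ c + 1 ≤ p.2).card + (if (a, c) ∈ D then 1 else 0) := by
  have hdis : Disjoint (D.filter fun p => p.1 = a ∧ c + 1 ≤ p.2)
      (D.filter (fun p => p = (a, c))) := by
    simp only [disjoint_left, mem_filter]
    rintro p ⟨hp, h1, h2⟩ ⟨hp2, hpe⟩
    subst hpe
    exact Nat.not_succ_le_self c h2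
  have hu : (D.filter fun p => p.1 = a ∧ c ≤ p.2)
      = (D.filter fun p => p.1 = a ∧ c + 1 ≤ p.2) ∪ D.filter (fun p => p = (a, c)) := by
    ext p
    simp only [mem_filter, mem_union, Prod.ext_iff]
    by_cases hp : p ∈ D <;> simp [hp]
    omega
  rw [hu, card_union_of_disjoint hdis, filter_eq']
  split_ifs <;> simp

lemma card_le_zero (D : Finset (ℕ × ℕ)) (a : ℕ) :
    (D.filter fun p => p.1 = a ∧ p.2 ≤ 0).card = if (a, 0) ∈ D then 1 else 0 := by
  have h : (D.filter fun p => p.1 = a ∧ p.2 ≤ 0) = D.filter (fun p => p = (a, 0)) := by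
    apply filter_congr
    intro p _
    simp [Prod.ext_iff, Nat.le_zero]
  rw [h, filter_eq']
  split_ifs <;> simp

lemma card_split (D : Finset (ℕ × ℕ)) (a c : ℕ) :
    (D.filter fun p => p.1 = a ∧ 0 ≤ p.2).card
      = (D.filter fun p => p.1 = a ∧ p.2 ≤ c).card
        + (D.filter fun p => p.1 = a ∧ c + 1 ≤ p.2).card := by
  have hdis : Disjoint (D.filter fun p => p.1 = a ∧ p.2 ≤ c)
      (D.filter fun p => p.1 = a ∧ c + 1 ≤ p.2) := by
    simp only [disjoint_left, mem_filter]
    rintro p ⟨hp, h1, h2⟩ ⟨hp2, h3, h4⟩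
    omega
  rw [← card_union_of_disjoint hdis]
  congr 1
  ext p
  simp only [mem_filter, mem_union]
  by_cases hp : p ∈ D <;> simp [hp]
  omega

lemma bal_succ (D : Finset (ℕ × ℕ)) (r c : ℕ) :
    bal D r (c + 1) = bal D r c
      + (if (r + 1, c + 1) ∈ D then 1 else 0) - (if (r, c + 1) ∈ D then 1 else 0) := by
  simp only [bal]
  rw [card_le_succ D (r + 1) c, card_le_succ D r c]
  split_ifs <;> push_cast <;> ring

lemma cobal_succ (D : Finset (ℕ × ℕ)) (r c : ℕ) :
    cobal D r c = cobal D r (c + 1)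
      + (if (r, c) ∈ D then 1 else 0) - (if (r + 1, c) ∈ D then 1 else 0) := by
  simp only [cobal]
  rw [card_ge_pred D r c, card_ge_pred D (r + 1) c]
  split_ifs <;> push_cast <;> ring

lemma bal_zero (D : Finset (ℕ × ℕ)) (r : ℕ) :
    bal D r 0 = (if (r + 1, 0) ∈ D then 1 else 0) - (if (r, 0) ∈ D then 1 else 0) := by
  simp only [bal]
  rw [card_le_zero D (r + 1), card_le_zero D r]
  split_ifs <;> push_cast <;> ring

lemma cobal_eq_bal (D : Finset (ℕ × ℕ)) (r c : ℕ) :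
    cobal D r (c + 1) = bal D r c + cobal D r 0 := by
  have h1 := card_split D (r + 1) c
  have h2 := card_split D r c
  simp only [bal, cobal]
  omega

lemma cobal_vanish (D : Finset (ℕ × ℕ)) (r c : ℕ) (h : ∀ p ∈ D, p.2 < c) :
    cobal D r c = 0 := by
  have h1 : ∀ a : ℕ, D.filter (fun p => p.1 = a ∧ c ≤ p.2) = ∅ := by
    intro a
    apply filter_eq_empty_iff.mpr
    intro p hp
    have := h p hp
    omega
  simp [cobal, h1]

lemma bal_succ_le (D : Finset (ℕ × ℕ)) (r c : ℕ) : bal D r (c + 1) ≤ bal D r c + 1 := by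
  have h := bal_succ D r c
  split_ifs at h <;> omega

lemma bal_zero_le (D : Finset (ℕ × ℕ)) (r : ℕ) : bal D r 0 ≤ 1 := by
  have h := bal_zero D r
  split_ifs at h <;> omega

lemma low_cell {D : Finset (ℕ × ℕ)} {r c : ℕ} (hpos : 0 < bal D r c)
    (hrec : ∀ c' < c, bal D r c' < bal D r c) :
    (r + 1, c) ∈ D ∧ (r, c) ∉ D := by
  cases c with
  | zero =>
      have h := bal_zero D r
      split_ifs at h <;> first | exact ⟨by assumption, by assumption⟩ | (exfalso; omega)
  | succ j =>
      have h := bal_succ D r j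
      have hlt := hrec j (Nat.lt_succ_self j)
      split_ifs at h <;> first | exact ⟨by assumption, by assumption⟩ | (exfalso; omega)

lemma high_cell {D : Finset (ℕ × ℕ)} {r c : ℕ} (hrec : cobal D r (c + 1) < cobal D r c) :
    (r, c) ∈ D ∧ (r + 1, c) ∉ D := by
  have h := cobal_succ D r c
  split_ifs at h <;> first | exact ⟨by assumption, by assumption⟩ | (exfalso; omega)

lemma cobal_move {D : Finset (ℕ × ℕ)} {r c : ℕ} (hy : (r + 1, c) ∈ D) (hx : (r, c) ∉ D)
    (c' : ℕ) :
    cobal (insert (r, c) (D.erase (r + 1, c))) r c' = cobal D r c' + (if c' ≤ c then 2 else 0) := by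
  have hne : ((r, c) : ℕ × ℕ) ≠ (r + 1, c) := by simp
  have h1 := card_move hne hy hx (fun p => p.1 = r ∧ c' ≤ p.2)
  have h2 := card_move hne hy hx (fun p => p.1 = r + 1 ∧ c' ≤ p.2)
  simp only [cobal]
  by_cases hcc : c' ≤ c
  · simp only [hcc] at h1 h2
    simp [show (r : ℕ) + 1 ≠ r by omega, show (r : ℕ) ≠ r + 1 by omega] at h1 h2
    rw [if_pos hcc]
    omega
  · simp only [hcc] at h1 h2
    simp [hcc, show (r : ℕ) + 1 ≠ r by omega, show (r : ℕ) ≠ r + 1 by omega] at h1 h2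
    rw [if_neg hcc]
    omega

lemma bal_move {D' : Finset (ℕ × ℕ)} {r c : ℕ} (hy : (r, c) ∈ D') (hx : (r + 1, c) ∉ D')
    (c' : ℕ) :
    bal (insert (r + 1, c) (D'.erase (r, c))) r c' = bal D' r c' + (if c ≤ c' then 2 else 0) := by
  have hne : ((r + 1, c) : ℕ × ℕ) ≠ (r, c) := by simp
  have h1 := card_move hne hy hx (fun p => p.1 = r + 1 ∧ p.2 ≤ c')
  have h2 := card_move hne hy hx (fun p => p.1 = r ∧ p.2 ≤ c')
  simp only [bal]
  by_cases hcc : c ≤ c'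
  · simp [hcc, show (r : ℕ) + 1 ≠ r by omega, show (r : ℕ) ≠ r + 1 by omega] at h1 h2
    rw [if_pos hcc]
    omega
  · simp [hcc, show (r : ℕ) + 1 ≠ r by omega, show (r : ℕ) ≠ r + 1 by omega] at h1 h2
    rw [if_neg hcc]
    omega



open Finset

lemma fwd {D D' : Finset (ℕ × ℕ)} {r : ℕ} (h : ERel D r D') : FRel D' r D := by
  obtain ⟨c, ⟨hmem, hpos, hrec⟩, hmax, hD'⟩ := h
  obtain ⟨hmemD, hnotD⟩ := low_cell hpos hrec
  have gmax : ∀ n, bal D r n ≤ bal D r c := by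
    by_contra hbad
    push_neg at hbad
    have hmlt := Nat.find_spec hbad
    set m := Nat.find hbad with hm
    have hmin : ∀ k, k < m → bal D r k ≤ bal D r c := by
      intro k hk
      have := Nat.find_min hbad hk
      omega
    have hrecm : ∀ k, k < m → bal D r k < bal D r m :=
      fun k hk => lt_of_le_of_lt (hmin k hk) hmlt
    have hposm : 0 < bal D r m := lt_trans hpos hmlt
    have hum : UnpairedLow D r m := ⟨(low_cell hposm hrecm).1, hposm, hrecm⟩
    have hmc := hmax m hum
    rcases lt_or_eq_of_le hmc with hlt | heq
    · exact absurd hmlt (not_lt.mpr (le_of_lt (hrec m hlt)))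
    · rw [heq] at hmlt; exact lt_irrefl _ hmlt
  have hmove : ∀ n, cobal D' r n = cobal D r n + (if n ≤ c then 2 else 0) := by
    intro n; rw [hD']; exact cobal_move hmemD hnotD n
  have hvan : cobal D r (D.sup Prod.snd + 1) = 0 := cobal_vanish _ _ _ (fun p hp => by
    have := Finset.le_sup (f := Prod.snd) hp
    omega)
  have h0 : bal D r (D.sup Prod.snd) + cobal D r 0 = 0 := by
    have := cobal_eq_bal D r (D.sup Prod.snd)
    omega
  have hSle : bal D r (D.sup Prod.snd) ≤ bal D r c := gmax (D.sup Prod.snd)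
  have F2 : 0 < cobal D' r c := by
    have h1 := hmove c
    rw [if_pos le_rfl] at h1
    cases c with
    | zero =>
        have := bal_zero_le D r
        omega
    | succ j =>
        have hst := bal_succ_le D r j
        have hCj := cobal_eq_bal D r j
        omega
  have F1 : ∀ n, c < n → cobal D' r n < cobal D' r c := by
    intro n hn
    obtain ⟨k, rfl⟩ : ∃ k, n = k + 1 := ⟨n - 1, by omega⟩
    have h1 := hmove (k + 1)
    rw [if_neg (by omega)] at h1
    have h2 := hmove c
    rw [if_pos le_rfl] at h2
    have hCk := cobal_eq_bal D r k
    have hgk := gmax k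
    cases c with
    | zero =>
        have := bal_zero_le D r
        omega
    | succ j =>
        have hst := bal_succ_le D r j
        have hCj := cobal_eq_bal D r j
        omega
  have F3 : ∀ n, n < c → cobal D' r n ≤ cobal D' r c := by
    intro n hn
    obtain ⟨j, rfl⟩ : ∃ j, c = j + 1 := ⟨c - 1, by omega⟩
    have h2 := hmove (j + 1)
    rw [if_pos le_rfl] at h2
    have hCj := cobal_eq_bal D r j
    have hj : bal D r j < bal D r (j + 1) := hrec j (by omega)
    have hst := bal_succ_le D r j
    have h1 := hmove n
    rw [if_pos (by omega)] at h1
    cases n with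
    | zero =>
        omega
    | succ k =>
        have hCk := cobal_eq_bal D r k
        have := hrec k (by omega)
        omega
  have hhigh : UnpairedHigh D' r c :=
    ⟨(high_cell (F1 (c + 1) (Nat.lt_succ_self c))).1, F2, fun n hn => F1 n hn⟩
  refine ⟨c, hhigh, ?_, ?_⟩
  · intro n hn
    by_contra hcn
    push_neg at hcn
    have ha := hn.2.2 c hcn
    have hb := F3 n hcn
    omega
  · have he : D'.erase (r, c) = D.erase (r + 1, c) := by
      rw [hD']
      exact erase_insert (fun hmem' => hnotD (mem_of_mem_erase hmem'))
    rw [he, insert_erase hmemD]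

lemma bwd {D D' : Finset (ℕ × ℕ)} {r : ℕ} (h : FRel D' r D) : ERel D r D' := by
  obtain ⟨c, ⟨hmem', hpos, hrec⟩, hmin, hD⟩ := h
  have hnot' : (r + 1, c) ∉ D' := (high_cell (hrec (c + 1) (Nat.lt_succ_self c))).2
  have hmax : ∀ n, cobal D' r n ≤ cobal D' r c := by
    by_contra hbad
    push_neg at hbad
    obtain ⟨c₀, hc₀⟩ := hbad
    have hc₀c : c₀ < c := by
      rcases lt_trichotomy c₀ c with h | h | h
      · exact h
      · subst h; exact absurd hc₀ (lt_irrefl _)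
      · have := hrec c₀ h; omega
    have hPm : cobal D' r c
        < cobal D' r (Nat.findGreatest (fun n => cobal D' r c < cobal D' r n) c) :=
      Nat.findGreatest_spec (P := fun n => cobal D' r c < cobal D' r n) (le_of_lt hc₀c) hc₀
    set m := Nat.findGreatest (fun n => cobal D' r c < cobal D' r n) c with hm
    have hgt : ∀ k, m < k → cobal D' r k ≤ cobal D' r c := by
      intro k hk
      rcases le_or_gt k c with hkc | hkc
      · have := Nat.findGreatest_is_greatest hk hkc
        omega
      · exact le_of_lt (hrec k hkc)
    have hrecm : ∀ k, k > m → cobal D' r k < cobal D' r m :=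
      fun k hk => lt_of_le_of_lt (hgt k hk) hPm
    have hum : UnpairedHigh D' r m :=
      ⟨(high_cell (hrecm (m + 1) (Nat.lt_succ_self m))).1, lt_trans hpos hPm, hrecm⟩
    have hcm := hmin m hum
    have hmc : m ≤ c := Nat.findGreatest_le c
    have heq : m = c := le_antisymm hmc hcm
    rw [heq] at hPm
    exact lt_irrefl _ hPm
  have h'c1 : cobal D' r (c + 1) = cobal D' r c - 1 := by
    have h := cobal_succ D' r c
    rw [if_pos hmem', if_neg hnot'] at h
    omega
  have hmoveb : ∀ n, bal D r n = bal D' r n + (if c ≤ n then 2 else 0) := by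
    intro n; rw [hD]; exact bal_move hmem' hnot' n
  have hposD : 0 < bal D r c := by
    have h1 := hmoveb c
    rw [if_pos le_rfl] at h1
    have hCc := cobal_eq_bal D' r c
    have h00 := hmax 0
    omega
  have hrecD : ∀ n, n < c → bal D r n < bal D r c := by
    intro n hn
    have h1 := hmoveb n
    rw [if_neg (by omega)] at h1
    have h2 := hmoveb c
    rw [if_pos le_rfl] at h2
    have hCn := cobal_eq_bal D' r n
    have hCc := cobal_eq_bal D' r c
    have := hmax (n + 1)
    omega
  refine ⟨c, ⟨(low_cell hposD hrecD).1, hposD, hrecD⟩, ?_, ?_⟩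
  · intro n hn
    by_contra hcn
    push_neg at hcn
    have hlt := hn.2.2 c hcn
    have h1 := hmoveb n
    rw [if_pos (by omega)] at h1
    have h2 := hmoveb c
    rw [if_pos le_rfl] at h2
    have hCn := cobal_eq_bal D' r n
    have hCc := cobal_eq_bal D' r c
    have := hrec (n + 1) (by omega)
    omega
  · have he : D.erase (r + 1, c) = D'.erase (r, c) := by
      rw [hD]
      exact erase_insert (fun hx => hnot' (mem_of_mem_erase hx))
    rw [he, insert_erase hmem']

end Stmt8

/-- For diagrams `D`, `D'`: `e_r(D) = D'` if and only if `f_r(D') = D`. -/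
theorem stmt_8 (D D' : Finset (ℕ × ℕ)) (r : ℕ) : ERel D r D' ↔ FRel D' r D :=
  ⟨Stmt8.fwd, Stmt8.bwd⟩
end

section
/- Let D be a diagram and consider sequences of cells (r_1,c_1), …, (r_k,c_k) in D with r_i < r_{i+1} and c_i ≤ c_{i+1} for all i. The maximal length of such a sequence in D equals the maximal length of such a sequence in e_r(D), whenever e_r(D) ≠ 0. -/
/-- `D` contains a sequence of `k` cells with strictly increasing rows and weakly
increasing columns. -/
def HasChainSeq (D : Finset (ℕ × ℕ)) (k : ℕ) : Prop :=
  ∃ f : Fin k → ℕ × ℕ, (∀ i, f i ∈ D) ∧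
    ∀ i j : Fin k, i < j → (f i).1 < (f j).1 ∧ (f i).2 ≤ (f j).2

/-- number of cells of `D` in row `s` with column in `[a, c]`. -/
def cnt (D : Finset (ℕ × ℕ)) (s a c : ℕ) : ℕ :=
  (D.filter fun p => p.1 = s ∧ a ≤ p.2 ∧ p.2 ≤ c).card

lemma bal_eq (D : Finset (ℕ × ℕ)) (r c : ℕ) :
    bal D r c = (cnt D (r + 1) 0 c : ℤ) - cnt D r 0 c := by
  simp [bal, cnt, Nat.zero_le]

lemma cnt_split (D : Finset (ℕ × ℕ)) (s a c : ℕ) (h : a ≤ c) :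
    cnt D s 0 c = cnt D s 0 a + cnt D s (a + 1) c := by
  unfold cnt
  rw [← Finset.card_union_of_disjoint]
  · rw [← Finset.filter_or]
    congr 1
    apply Finset.filter_congr
    intro p _
    constructor
    · intro hp; omega
    · intro hp; omega
  · rw [Finset.disjoint_left]
    intro p hp hq
    simp only [Finset.mem_filter] at hp hq
    omega

lemma cnt_pos (D : Finset (ℕ × ℕ)) {s a c x : ℕ} (hx : (s, x) ∈ D) (h1 : a ≤ x)
    (h2 : x ≤ c) : 1 ≤ cnt D s a c :=
  Finset.card_pos.2 ⟨(s, x), Finset.mem_filter.2 ⟨hx, rfl, h1, h2⟩⟩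

lemma cnt_le_one (D : Finset (ℕ × ℕ)) {s a c : ℕ}
    (h : ∀ x, (s, x) ∈ D → a ≤ x → x ≤ c → x = c) : cnt D s a c ≤ 1 := by
  refine Finset.card_le_one.2 ?_
  intro p hp q hq
  simp only [Finset.mem_filter, cnt] at hp hq
  obtain ⟨hp0, hp1, hp2, hp3⟩ := hp
  obtain ⟨hq0, hq1, hq2, hq3⟩ := hq
  have hp' : (s, p.2) ∈ D := by rw [← hp1]; simpa using hp0
  have hq' : (s, q.2) ∈ D := by rw [← hq1]; simpa using hq0
  have e1 := h p.2 hp' hp2 hp3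
  have e2 := h q.2 hq' hq2 hq3
  have hpe : p = (s, c) := by
    have := Prod.mk.eta (p := p)
    rw [← this, hp1, e1]
  have hqe : q = (s, c) := by
    have := Prod.mk.eta (p := q)
    rw [← this, hq1, e2]
  rw [hpe, hqe]

lemma cnt_eq_zero (D : Finset (ℕ × ℕ)) {s a c : ℕ}
    (h : ∀ x, a ≤ x → x ≤ c → (s, x) ∉ D) : cnt D s a c = 0 := by
  rw [cnt, Finset.card_eq_zero, Finset.filter_eq_empty_iff]
  intro p hp hcond
  obtain ⟨h1, h2, h3⟩ := hcond
  exact h p.2 h2 h3 (by rw [← h1]; simpa using hp)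

lemma bal_diff (D : Finset (ℕ × ℕ)) (r : ℕ) {a c : ℕ} (h : a ≤ c) :
    bal D r c - bal D r a = (cnt D (r + 1) (a + 1) c : ℤ) - cnt D r (a + 1) c := by
  rw [bal_eq, bal_eq, cnt_split D (r + 1) a c h, cnt_split D r a c h]
  push_cast
  ring

lemma exists_lower (D : Finset (ℕ × ℕ)) {r c a : ℕ} (hU : UnpairedLow D r c)
    (ha : (r, a) ∈ D) (hac : a ≤ c) :
    ∃ b', a ≤ b' ∧ b' < c ∧ (r + 1, b') ∈ D := by
  by_contra hcon
  push_neg at hcon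
  obtain ⟨hmem, hpos, hlt⟩ := hU
  have hup : cnt D (r + 1) a c ≤ 1 := by
    apply cnt_le_one
    intro x hx h1 h2
    by_contra hne
    exact hcon x h1 (lt_of_le_of_ne h2 hne) hx
  have hdn : 1 ≤ cnt D r a c := cnt_pos D ha le_rfl hac
  rcases Nat.eq_zero_or_pos a with rfl | hapos
  · rw [bal_eq] at hpos
    omega
  · have hd := bal_diff D r (show a - 1 ≤ c by omega)
    have hl := hlt (a - 1) (by omega)
    rw [show a - 1 + 1 = a by omega] at hd
    omega

lemma exists_upper (D : Finset (ℕ × ℕ)) {r c b : ℕ} (hU : UnpairedLow D r c)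
    (hmax : ∀ c', UnpairedLow D r c' → c' ≤ c) (hb : (r + 1, b) ∈ D) (hcb : c < b) :
    ∃ a', c < a' ∧ a' ≤ b ∧ (r, a') ∈ D := by
  by_contra hcon
  push_neg at hcon
  obtain ⟨hmem, hpos, hlt⟩ := hU
  have key : ∀ c'', c ≤ c'' → c'' < b → bal D r c'' < bal D r b := by
    intro c'' h1 h2
    have hd := bal_diff D r (le_of_lt h2)
    have hzero : cnt D r (c'' + 1) b = 0 :=
      cnt_eq_zero D (fun x hx1 hx2 => hcon x (by omega) hx2)
    have hone : 1 ≤ cnt D (r + 1) (c'' + 1) b := cnt_pos D hb (by omega) le_rfl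
    omega
  have hcb' : bal D r c < bal D r b := key c le_rfl hcb
  have hbU : UnpairedLow D r b := by
    refine ⟨hb, by omega, ?_⟩
    intro c'' hc''
    rcases lt_or_ge c'' c with h | h
    · have := hlt c'' h; omega
    · exact key c'' h hc''
  have := hmax b hbU
  omega

lemma chain_update {k : ℕ} {f : Fin k → ℕ × ℕ}
    (hf2 : ∀ i j : Fin k, i < j → (f i).1 < (f j).1 ∧ (f i).2 ≤ (f j).2)
    (i : Fin k) (v : ℕ × ℕ)
    (h1 : ∀ j, j < i → (f j).1 < v.1 ∧ (f j).2 ≤ v.2)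
    (h2 : ∀ j, i < j → v.1 < (f j).1 ∧ v.2 ≤ (f j).2) :
    ∀ p q : Fin k, p < q →
      (Function.update f i v p).1 < (Function.update f i v q).1 ∧
        (Function.update f i v p).2 ≤ (Function.update f i v q).2 := by
  intro p q hpq
  rcases eq_or_ne p i with rfl | hp
  · rw [Function.update_self, Function.update_of_ne hpq.ne']
    exact h2 q hpq
  · rcases eq_or_ne q i with rfl | hq
    · rw [Function.update_self, Function.update_of_ne hp]
      exact h1 p hpq
    · rw [Function.update_of_ne hp, Function.update_of_ne hq]
      exact hf2 p q hpq

lemma erel_forward (D : Finset (ℕ × ℕ)) (r c : ℕ) (hU : UnpairedLow D r c)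
    (hmax : ∀ c', UnpairedLow D r c' → c' ≤ c) (k : ℕ) :
    HasChainSeq D k → HasChainSeq (insert (r, c) (D.erase (r + 1, c))) k := by
  rintro ⟨f, hf1, hf2⟩
  have hmemD' : ∀ p : ℕ × ℕ, p ∈ D → p ≠ (r + 1, c) →
      p ∈ insert (r, c) (D.erase (r + 1, c)) :=
    fun p hp hne => Finset.mem_insert_of_mem (Finset.mem_erase.2 ⟨hne, hp⟩)
  have hrowidx : ∀ p q : Fin k, (f p).1 < (f q).1 → p < q := by
    intro p q h
    rcases lt_trichotomy p q with h' | h' | h'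
    · exact h'
    · rw [h'] at h; omega
    · have := (hf2 q p h').1; omega
  have hrowinj : ∀ p q : Fin k, (f p).1 = (f q).1 → p = q := by
    intro p q h
    rcases lt_trichotomy p q with h' | h' | h'
    · have := (hf2 p q h').1; omega
    · exact h'
    · have := (hf2 q p h').1; omega
  by_cases hi : ∃ i, f i = (r + 1, c)
  · obtain ⟨i, hfi⟩ := hi
    have hrow_i : (f i).1 = r + 1 := by rw [hfi]
    have hcol_i : (f i).2 = c := by rw [hfi]
    have huniq : ∀ p, p ≠ i → f p ≠ (r + 1, c) := by
      intro p hp heq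
      apply hp
      apply hrowinj
      rw [heq, hrow_i]
    by_cases hj : ∃ j, (f j).1 = r
    · obtain ⟨j, hjrow⟩ := hj
      have hji : j < i := hrowidx j i (by omega)
      have haj : (f j).2 ≤ c := by have := (hf2 j i hji).2; omega
      have hjD : (r, (f j).2) ∈ D := by
        have h := hf1 j; rw [← hjrow]; simpa using h
      obtain ⟨b', hab', hb'c, hb'D⟩ := exists_lower D hU hjD haj
      refine ⟨Function.update f i (r + 1, b'), ?_, ?_⟩
      · intro p
        rcases eq_or_ne p i with rfl | hp
        · rw [Function.update_self]
          exact hmemD' _ hb'D (by simp; omega)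
        · rw [Function.update_of_ne hp]
          exact hmemD' _ (hf1 p) (huniq p hp)
      · apply chain_update hf2
        · intro q hq
          have hq1 := (hf2 q i hq).1
          constructor
          · show (f q).1 < r + 1; omega
          · show (f q).2 ≤ b'
            rcases eq_or_lt_of_le (show (f q).1 ≤ r by omega) with he | hlt'
            · have : q = j := hrowinj q j (by omega)
              rw [this]; exact hab'
            · have hqj : q < j := hrowidx q j (by omega)
              have := (hf2 q j hqj).2; omega
        · intro q hq
          have hq1 := (hf2 i q hq).1
          have hq2 := (hf2 i q hq).2
          exact ⟨by show r + 1 < (f q).1; omega, by show b' ≤ (f q).2; omega⟩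
    · push_neg at hj
      refine ⟨Function.update f i (r, c), ?_, ?_⟩
      · intro p
        rcases eq_or_ne p i with rfl | hp
        · rw [Function.update_self]; exact Finset.mem_insert_self _ _
        · rw [Function.update_of_ne hp]
          exact hmemD' _ (hf1 p) (huniq p hp)
      · apply chain_update hf2
        · intro q hq
          have h1 := (hf2 q i hq).1
          have h2 := (hf2 q i hq).2
          have h3 := hj q
          exact ⟨by show (f q).1 < r; omega, by show (f q).2 ≤ c; omega⟩
        · intro q hq
          have h1 := (hf2 i q hq).1
          have h2 := (hf2 i q hq).2
          exact ⟨by show r < (f q).1; omega, by show c ≤ (f q).2; omega⟩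
  · push_neg at hi
    exact ⟨f, fun p => hmemD' _ (hf1 p) (hi p), hf2⟩

lemma erel_backward (D : Finset (ℕ × ℕ)) (r c : ℕ) (hU : UnpairedLow D r c)
    (hmax : ∀ c', UnpairedLow D r c' → c' ≤ c) (k : ℕ) :
    HasChainSeq (insert (r, c) (D.erase (r + 1, c))) k → HasChainSeq D k := by
  rintro ⟨f, hf1, hf2⟩
  have hmemD : ∀ p : ℕ × ℕ, p ∈ insert (r, c) (D.erase (r + 1, c)) → p ≠ (r, c) →
      p ∈ D := by
    intro p hp hne
    rcases Finset.mem_insert.1 hp with h | h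
    · exact absurd h hne
    · exact Finset.mem_of_mem_erase h
  have hrowidx : ∀ p q : Fin k, (f p).1 < (f q).1 → p < q := by
    intro p q h
    rcases lt_trichotomy p q with h' | h' | h'
    · exact h'
    · rw [h'] at h; omega
    · have := (hf2 q p h').1; omega
  have hrowinj : ∀ p q : Fin k, (f p).1 = (f q).1 → p = q := by
    intro p q h
    rcases lt_trichotomy p q with h' | h' | h'
    · have := (hf2 p q h').1; omega
    · exact h'
    · have := (hf2 q p h').1; omega
  by_cases hi : ∃ i, f i = (r, c)
  · obtain ⟨i, hfi⟩ := hi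
    have hrow_i : (f i).1 = r := by rw [hfi]
    have hcol_i : (f i).2 = c := by rw [hfi]
    have huniq : ∀ p, p ≠ i → f p ≠ (r, c) := by
      intro p hp heq
      apply hp
      apply hrowinj
      rw [heq, hrow_i]
    by_cases hj : ∃ j, (f j).1 = r + 1
    · obtain ⟨j, hjrow⟩ := hj
      have hij : i < j := hrowidx i j (by omega)
      have hjne : f j ≠ (r, c) := by
        intro h; rw [h] at hjrow; simp at hjrow
      have hjD : f j ∈ D := hmemD _ (hf1 j) hjne
      have hjD2 : (r + 1, (f j).2) ∈ D := by rw [← hjrow]; simpa using hjD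
      have hbne : (f j).2 ≠ c := by
        intro h
        have hje : f j = (r + 1, c) := by
          have := Prod.mk.eta (p := f j)
          rw [← this, hjrow, h]
        have := hf1 j
        rw [hje] at this
        simp [Finset.mem_insert, Finset.mem_erase] at this
      have hcb : c ≤ (f j).2 := by have := (hf2 i j hij).2; omega
      obtain ⟨a', hca', ha'b, ha'D⟩ :=
        exists_upper D hU hmax hjD2 (by omega)
      refine ⟨Function.update f i (r, a'), ?_, ?_⟩
      · intro p
        rcases eq_or_ne p i with rfl | hp
        · rw [Function.update_self]; exact ha'D
        · rw [Function.update_of_ne hp]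
          exact hmemD _ (hf1 p) (huniq p hp)
      · apply chain_update hf2
        · intro q hq
          have h1 := (hf2 q i hq).1
          have h2 := (hf2 q i hq).2
          exact ⟨by show (f q).1 < r; omega, by show (f q).2 ≤ a'; omega⟩
        · intro q hq
          have h1 := (hf2 i q hq).1
          constructor
          · show r < (f q).1; omega
          · show a' ≤ (f q).2
            rcases eq_or_lt_of_le (show r + 1 ≤ (f q).1 by omega) with he | hlt'
            · have : q = j := hrowinj q j (by omega)
              rw [this]; omega
            · have hjq : j < q := hrowidx j q (by omega)
              have := (hf2 j q hjq).2; omega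
    · push_neg at hj
      refine ⟨Function.update f i (r + 1, c), ?_, ?_⟩
      · intro p
        rcases eq_or_ne p i with rfl | hp
        · rw [Function.update_self]; exact hU.1
        · rw [Function.update_of_ne hp]
          exact hmemD _ (hf1 p) (huniq p hp)
      · apply chain_update hf2
        · intro q hq
          have h1 := (hf2 q i hq).1
          have h2 := (hf2 q i hq).2
          exact ⟨by show (f q).1 < r + 1; omega, by show (f q).2 ≤ c; omega⟩
        · intro q hq
          have h1 := (hf2 i q hq).1
          have h2 := (hf2 i q hq).2
          have h3 := hj q
          exact ⟨by show r + 1 < (f q).1; omega, by show c ≤ (f q).2; omega⟩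
  · push_neg at hi
    exact ⟨f, fun p => hmemD _ (hf1 p) (hi p), hf2⟩

/-- The maximal length of a sequence of cells with strictly increasing rows and weakly
increasing columns is unchanged by the raising operator `e_r`. -/
theorem stmt_10 (D D' : Finset (ℕ × ℕ)) (r : ℕ) (h : ERel D r D') (k : ℕ) :
    HasChainSeq D k ↔ HasChainSeq D' k := by
  obtain ⟨c, hU, hmax, rfl⟩ := h
  exact ⟨erel_forward D r c hU hmax k, erel_backward D r c hU hmax k⟩
end

section
/- Let P be a finite (3+1)-free poset and A a P-array with rows r and r+1 given by chains a_1 <_P ⋯ <_P a_m and b_1 <_P ⋯ <_P b_n. Then any weak r alignment of A exists, and among all weak r alignments there is a unique minimal one with respect to the partial order in which φ ⪯ ψ iff every element's column in φ is weakly left of its column in ψ. -/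
/-- A weak `r` alignment of the two rows `a_1 <_P ⋯ <_P a_m` (row `r`) and
`b_1 <_P ⋯ <_P b_n` (row `r+1`) of a `P`-array, recorded by the column assignments
`φa` and `φb` (columns indexed from 0):
(1) the columns are strictly increasing along each row;
(2) no occupied column is preceded by an empty one;
(3) if `b_j <_P a_i` then `b_j` is strictly left of `a_i`;
(4) if an element lies in column `c` and column `c+1` is nonempty, then some element
greater than it lies in column `c+1`. -/
def WeakAlign {P : Type*} [PartialOrder P] {m n : ℕ} (a : Fin m → P) (b : Fin n → P)
    (φa : Fin m → ℕ) (φb : Fin n → ℕ) : Prop :=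
  StrictMono φa ∧ StrictMono φb ∧
  (∀ c : ℕ, 0 < c → ((∃ i, φa i = c) ∨ (∃ j, φb j = c)) →
    ((∃ i, φa i = c - 1) ∨ (∃ j, φb j = c - 1))) ∧
  (∀ (i : Fin m) (j : Fin n), b j < a i → φb j < φa i) ∧
  (∀ i : Fin m, ((∃ i', φa i' = φa i + 1) ∨ (∃ j, φb j = φa i + 1)) →
    ((∃ i', φa i' = φa i + 1 ∧ a i < a i') ∨ (∃ j, φb j = φa i + 1 ∧ a i < b j))) ∧
  (∀ j : Fin n, ((∃ i, φa i = φb j + 1) ∨ (∃ j', φb j' = φb j + 1)) →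
    ((∃ i, φa i = φb j + 1 ∧ b j < a i) ∨ (∃ j', φb j' = φb j + 1 ∧ b j < b j')))

/-!
Existence is proved by induction on the rows: the last entry of row `a` is put into a new
column on the right, alone if it lies above every entry of row `b`, and together with the last
entry of row `b` otherwise.

Uniqueness of a minimal alignment comes from closure under pointwise minimum: alignments form
a well-founded set of column vectors, so a minimal one exists, and taking its minimum with any
other alignment shows that it is least. The delicate condition for the minimum is (2). If
column `d` of the minimum were empty while column `d + 1` is not, column `d` would be occupied
in both alignments, each of its entries lying strictly further left in the other alignment.
Climbing from such an entry `b_q` to column `d` through ever larger entries produces an entry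
above `b_q` that violates (3) or the order of row `b` in the other alignment.
-/

open Set

lemma StrictMono.inf {α β : Type*} [Preorder α] [LinearOrder β] {f g : α → β}
    (hf : StrictMono f) (hg : StrictMono g) : StrictMono (f ⊓ g) := fun _ _ hij =>
  lt_inf_iff.2 ⟨inf_le_left.trans_lt (hf hij), inf_le_right.trans_lt (hg hij)⟩

lemma Fin.strictMono_snoc {α : Type*} [Preorder α] {n : ℕ} {f : Fin n → α} {x : α}
    (hf : StrictMono f) (hx : ∀ i, f i < x) : StrictMono (Fin.snoc f x : Fin (n + 1) → α) := by
  intro i j hij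
  induction j using Fin.lastCases with
  | last =>
    induction i using Fin.lastCases with
    | last => exact absurd hij (lt_irrefl _)
    | cast i => simpa using hx i
  | cast j =>
    induction i using Fin.lastCases with
    | last => exact absurd hij (not_lt.2 (Fin.le_last _))
    | cast i => simpa using hf (Fin.castSucc_lt_castSucc_iff.1 hij)

lemma image_snd_union_prod_singleton {α : Type*} {S : Set (α × ℕ)} {T : Set α} {K : ℕ}
    (hS : Prod.snd '' S = Iio K) (hT : T.Nonempty) :
    Prod.snd '' (S ∪ T ×ˢ {K}) = Iio (K + 1) := by
  ext c
  simp only [image_union, hS, snd_image_prod hT, mem_union, mem_Iio, mem_singleton_iff]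
  omega

lemma InfClosed.exists_isLeast {α : Type*} [SemilatticeInf α] [WellFoundedLT α] {s : Set α}
    (hs : InfClosed s) (hne : s.Nonempty) : ∃ a, IsLeast s a := by
  obtain ⟨a, ha⟩ := exists_minimal_of_wellFoundedLT (· ∈ s) hne
  exact ⟨a, ha.prop, fun b hb => (ha.2 (hs ha.prop hb) inf_le_left).trans inf_le_right⟩

section Ladder

variable {P : Type*} [PartialOrder P] {S : Set (P × ℕ)}

/-- Conditions (2) and (4) of a weak alignment, read off the set of its cells
`(entry, column)`. -/
structure IsLadder (S : Set (P × ℕ)) : Prop where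
  mem_image_of_succ : ∀ c, c + 1 ∈ Prod.snd '' S → c ∈ Prod.snd '' S
  exists_gt_succ :
    ∀ x c, (x, c) ∈ S → c + 1 ∈ Prod.snd '' S → ∃ y, (y, c + 1) ∈ S ∧ x < y

namespace IsLadder

lemma mem_image_of_le (hS : IsLadder S) {c d : ℕ} (hcd : c ≤ d) (hd : d ∈ Prod.snd '' S) :
    c ∈ Prod.snd '' S := by
  induction d, hcd using Nat.le_induction with
  | base => exact hd
  | succ d _ ih => exact ih (hS.mem_image_of_succ d hd)

lemma exists_gt (hS : IsLadder S) {x : P} {c d : ℕ} (hx : (x, c) ∈ S) (hcd : c < d)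
    (hd : d ∈ Prod.snd '' S) : ∃ y, (y, d) ∈ S ∧ x < y := by
  induction d, hcd using Nat.le_induction with
  | base => exact hS.exists_gt_succ x c hx hd
  | succ d _ ih =>
    obtain ⟨y, hy, hxy⟩ := ih (hS.mem_image_of_succ d hd)
    obtain ⟨z, hz, hyz⟩ := hS.exists_gt_succ y d hy hd
    exact ⟨z, hz, hxy.trans hyz⟩

lemma union_prod_singleton (hS : IsLadder S) {T : Set P} {K : ℕ}
    (hcols : Prod.snd '' S = Iio K)
    (hT : ∀ x c, (x, c) ∈ S → c + 1 = K → ∃ t ∈ T, x < t) :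
    IsLadder (S ∪ T ×ˢ {K}) := by
  have hlt : ∀ x c, (x, c) ∈ S → c < K := fun x c h => by
    rw [← mem_Iio, ← hcols]; exact ⟨_, h, rfl⟩
  have hocc : ∀ c < K, c ∈ Prod.snd '' (S ∪ T ×ˢ {K}) := fun c hc => by
    rw [← mem_Iio, ← hcols] at hc; exact image_mono subset_union_left hc
  constructor
  · rintro c ⟨⟨x, _⟩, hx | ⟨-, hc⟩, rfl⟩
    · exact hocc c (by have := hlt _ _ hx; omega)
    · exact hocc c (by simp only [mem_singleton_iff] at hc; omega)
  · rintro x c (hx | ⟨-, hc⟩) ⟨⟨y, _⟩, hy | ⟨-, hy⟩, rfl⟩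
    · obtain ⟨z, hz, hxz⟩ := hS.exists_gt_succ x c hx ⟨_, hy, rfl⟩
      exact ⟨z, Or.inl hz, hxz⟩
    · obtain ⟨t, ht, hxt⟩ := hT x c hx (by simpa using hy)
      exact ⟨t, Or.inr ⟨ht, by simpa using hy⟩, hxt⟩
    · have := hlt _ _ hy; simp only [mem_singleton_iff] at hc; omega
    · simp only [mem_singleton_iff] at hc hy; omega

end IsLadder

end Ladder

namespace WeakAlign

variable {P : Type*} {m n : ℕ} {a : Fin m → P} {b : Fin n → P}
  {f f' : Fin m → ℕ} {g g' : Fin n → ℕ} {K : ℕ}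

def cells (a : Fin m → P) (b : Fin n → P) (f : Fin m → ℕ) (g : Fin n → ℕ) :
    Set (P × ℕ) :=
  range (fun i => (a i, f i)) ∪ range (fun j => (b j, g j))

lemma mem_cells {x : P} {c : ℕ} :
    (x, c) ∈ cells a b f g ↔ (∃ i, a i = x ∧ f i = c) ∨ ∃ j, b j = x ∧ g j = c := by
  simp [cells]

lemma mem_image_snd_cells {c : ℕ} :
    c ∈ Prod.snd '' cells a b f g ↔ (∃ i, f i = c) ∨ ∃ j, g j = c := by
  simp [cells, image_union, ← range_comp, Function.comp_def]

lemma cells_comm : cells a b f g = cells b a g f := union_comm _ _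

lemma cells_snoc_left {x : P} :
    cells (Fin.snoc a x : Fin (m + 1) → P) b (Fin.snoc f K : Fin (m + 1) → ℕ) g =
      cells a b f g ∪ {x} ×ˢ {K} := by
  ext ⟨z, c⟩
  simp only [mem_cells, Fin.exists_fin_succ', Fin.snoc_castSucc, Fin.snoc_last, mem_union,
    mem_prod, mem_singleton_iff, @eq_comm _ z, @eq_comm _ c]
  exact or_right_comm

lemma cells_snoc {x y : P} :
    cells (Fin.snoc a x : Fin (m + 1) → P) (Fin.snoc b y : Fin (n + 1) → P)
      (Fin.snoc f K : Fin (m + 1) → ℕ) (Fin.snoc g K : Fin (n + 1) → ℕ) =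
      cells a b f g ∪ {x, y} ×ˢ {K} := by
  ext ⟨z, c⟩
  simp only [mem_cells, Fin.exists_fin_succ', Fin.snoc_castSucc, Fin.snoc_last, mem_union,
    mem_prod, mem_singleton_iff, mem_insert_iff, @eq_comm _ z, @eq_comm _ c, or_and_right]
  exact or_or_or_comm

lemma lt_of_image_snd_cells_eq (hcols : Prod.snd '' cells a b f g = Iio K) :
    (∀ i, f i < K) ∧ ∀ j, g j < K := by
  simp only [Set.ext_iff, mem_image_snd_cells, mem_Iio] at hcols
  exact ⟨fun i => (hcols _).1 (Or.inl ⟨i, rfl⟩), fun j => (hcols _).1 (Or.inr ⟨j, rfl⟩)⟩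

variable [PartialOrder P]

lemma exists_mem_cells_gt {x : P} {c : ℕ} :
    (∃ y, (y, c) ∈ cells a b f g ∧ x < y) ↔
      (∃ i, f i = c ∧ x < a i) ∨ ∃ j, g j = c ∧ x < b j := by
  simp only [mem_cells]
  constructor
  · rintro ⟨y, ⟨i, rfl, hi⟩ | ⟨j, rfl, hj⟩, hxy⟩
    exacts [Or.inl ⟨i, hi, hxy⟩, Or.inr ⟨j, hj, hxy⟩]
  · rintro (⟨i, hi, hxy⟩ | ⟨j, hj, hxy⟩)
    exacts [⟨a i, Or.inl ⟨i, rfl, hi⟩, hxy⟩, ⟨b j, Or.inr ⟨j, rfl, hj⟩, hxy⟩]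

theorem _root_.weakAlign_iff : WeakAlign a b f g ↔ StrictMono f ∧ StrictMono g ∧
    (∀ i j, b j < a i → g j < f i) ∧ IsLadder (cells a b f g) := by
  have hgap : (∀ c, 0 < c → ((∃ i, f i = c) ∨ (∃ j, g j = c)) →
      ((∃ i, f i = c - 1) ∨ (∃ j, g j = c - 1))) ↔
      ∀ c, c + 1 ∈ Prod.snd '' cells a b f g → c ∈ Prod.snd '' cells a b f g := by
    simp only [mem_image_snd_cells]
    refine ⟨fun h c hc => h (c + 1) c.succ_pos hc, fun h c hc hocc => ?_⟩
    obtain ⟨d, rfl⟩ := Nat.exists_eq_add_one.2 hc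
    exact h d hocc
  have hstep : ((∀ i : Fin m, ((∃ i', f i' = f i + 1) ∨ (∃ j, g j = f i + 1)) →
      ((∃ i', f i' = f i + 1 ∧ a i < a i') ∨ (∃ j, g j = f i + 1 ∧ a i < b j))) ∧
      (∀ j : Fin n, ((∃ i, f i = g j + 1) ∨ (∃ j', g j' = g j + 1)) →
      ((∃ i, f i = g j + 1 ∧ b j < a i) ∨ (∃ j', g j' = g j + 1 ∧ b j < b j')))) ↔
      ∀ x c, (x, c) ∈ cells a b f g → c + 1 ∈ Prod.snd '' cells a b f g →
        ∃ y, (y, c + 1) ∈ cells a b f g ∧ x < y := by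
    simp only [mem_image_snd_cells, ← exists_mem_cells_gt]
    constructor
    · rintro ⟨ha, hb⟩ x c hx
      rcases mem_cells.1 hx with ⟨i, rfl, rfl⟩ | ⟨j, rfl, rfl⟩
      exacts [ha i, hb j]
    · exact fun h => ⟨fun i => h _ _ (mem_cells.2 (Or.inl ⟨i, rfl, rfl⟩)),
        fun j => h _ _ (mem_cells.2 (Or.inr ⟨j, rfl, rfl⟩))⟩
  rw [WeakAlign, hgap, hstep]
  exact ⟨fun ⟨hf, hg, hgap, hba, hstep⟩ => ⟨hf, hg, hba, hgap, hstep⟩,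
    fun ⟨hf, hg, hba, hgap, hstep⟩ => ⟨hf, hg, hgap, hba, hstep⟩⟩

lemma mem_image_snd_cells_of_inf (hS : IsLadder (cells a b f g)) {c : ℕ}
    (hc : c ∈ Prod.snd '' cells a b (f ⊓ f') (g ⊓ g')) : c ∈ Prod.snd '' cells a b f g := by
  rcases mem_image_snd_cells.1 hc with ⟨i, rfl⟩ | ⟨j, rfl⟩
  · exact hS.mem_image_of_le inf_le_left (mem_image_snd_cells.2 (Or.inl ⟨i, rfl⟩))
  · exact hS.mem_image_of_le inf_le_left (mem_image_snd_cells.2 (Or.inr ⟨j, rfl⟩))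

lemma exists_gt_mem_cells_inf_of_le (ha : StrictMono a) (hb : StrictMono b)
    (hf : StrictMono f) (hf' : StrictMono f') (hg : StrictMono g)
    (hS : IsLadder (cells a b f g)) {i : Fin m} (hi : f i ≤ f' i)
    (hocc : f i + 1 ∈ Prod.snd '' cells a b (f ⊓ f') (g ⊓ g')) :
    ∃ y, (y, f i + 1) ∈ cells a b (f ⊓ f') (g ⊓ g') ∧ a i < y := by
  have hF := hf.inf hf'
  have hFi : (f ⊓ f') i = f i := inf_eq_left.2 hi
  rw [exists_mem_cells_gt]
  rcases mem_image_snd_cells.1 hocc with ⟨i', hi'⟩ | ⟨j, hj⟩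
  · exact Or.inl ⟨i', hi', ha (hF.lt_iff_lt.1 (by omega))⟩
  -- The entry above `a i` in column `f i + 1` of `(f, g)` either keeps that column in the
  -- minimum or lies weakly below `b j` in row `b`.
  obtain ⟨w, hw, hiw⟩ := hS.exists_gt_succ (a i) (f i) (mem_cells.2 (Or.inl ⟨i, rfl, rfl⟩))
    (mem_image_snd_cells_of_inf hS hocc)
  rcases mem_cells.1 hw with ⟨i', rfl, hi'⟩ | ⟨j', rfl, hj'⟩
  · have hii' := hF (hf.lt_iff_lt.1 (by omega : f i < f i'))
    simp only [Pi.inf_apply] at hFi hii' ⊢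
    exact Or.inl ⟨i', by omega, hiw⟩
  · have hj'j : g j' ≤ g j := by simp only [Pi.inf_apply] at hj; omega
    exact Or.inr ⟨j, hj, hiw.trans_le (hb.monotone (hg.le_iff_le.1 hj'j))⟩

lemma exists_gt_mem_cells_inf_left (ha : StrictMono a) (hb : StrictMono b)
    (hf : StrictMono f) (hf' : StrictMono f') (hg : StrictMono g) (hg' : StrictMono g')
    (hS : IsLadder (cells a b f g)) (hS' : IsLadder (cells a b f' g')) (i : Fin m)
    (hocc : (f ⊓ f') i + 1 ∈ Prod.snd '' cells a b (f ⊓ f') (g ⊓ g')) :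
    ∃ y, (y, (f ⊓ f') i + 1) ∈ cells a b (f ⊓ f') (g ⊓ g') ∧ a i < y := by
  rcases le_total (f i) (f' i) with hi | hi
  · rw [Pi.inf_apply, inf_eq_left.2 hi] at hocc ⊢
    exact exists_gt_mem_cells_inf_of_le ha hb hf hf' hg hS hi hocc
  · rw [inf_comm f, inf_comm g, Pi.inf_apply, inf_eq_left.2 hi] at hocc ⊢
    exact exists_gt_mem_cells_inf_of_le ha hb hf' hf hg' hS' hi hocc

lemma exists_gt_mem_cells_inf (ha : StrictMono a) (hb : StrictMono b)
    (hf : StrictMono f) (hf' : StrictMono f') (hg : StrictMono g) (hg' : StrictMono g')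
    (hS : IsLadder (cells a b f g)) (hS' : IsLadder (cells a b f' g')) (x : P) (c : ℕ)
    (hx : (x, c) ∈ cells a b (f ⊓ f') (g ⊓ g'))
    (hocc : c + 1 ∈ Prod.snd '' cells a b (f ⊓ f') (g ⊓ g')) :
    ∃ y, (y, c + 1) ∈ cells a b (f ⊓ f') (g ⊓ g') ∧ x < y := by
  rcases mem_cells.1 hx with ⟨i, rfl, rfl⟩ | ⟨j, rfl, rfl⟩
  · exact exists_gt_mem_cells_inf_left ha hb hf hf' hg hg' hS hS' i hocc
  · rw [cells_comm] at hS hS' hocc ⊢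
    exact exists_gt_mem_cells_inf_left hb ha hg hg' hf hf' hS hS' j hocc

lemma ne_of_notMem_image_snd_cells_inf (hb : StrictMono b) (h : WeakAlign a b f g)
    (h' : WeakAlign a b f' g') {d : ℕ} (hd : d ∉ Prod.snd '' cells a b (f ⊓ f') (g ⊓ g'))
    (hocc : d ∈ Prod.snd '' cells a b f g) (q : Fin n) : g' q ≠ d := by
  obtain ⟨-, -, -, hS⟩ := weakAlign_iff.1 h
  obtain ⟨-, hg', hba', -⟩ := weakAlign_iff.1 h'
  simp only [mem_image_snd_cells, Pi.inf_apply, not_or, not_exists] at hd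
  intro hq
  have hgq : g q < d := by have := hd.2 q; omega
  obtain ⟨y, hy, hqy⟩ := hS.exists_gt (mem_cells.2 (Or.inr ⟨q, rfl, rfl⟩)) hgq hocc
  rcases mem_cells.1 hy with ⟨i, rfl, hi⟩ | ⟨j, rfl, hj⟩
  · have := hba' i q hqy; have := hd.1 i; omega
  · have := hg' (hb.lt_iff_lt.1 hqy); have := hd.2 j; omega

lemma mem_image_snd_cells_inf_of_succ (hb : StrictMono b) (h : WeakAlign a b f g)
    (h' : WeakAlign a b f' g') (d : ℕ)
    (hocc : d + 1 ∈ Prod.snd '' cells a b (f ⊓ f') (g ⊓ g')) :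
    d ∈ Prod.snd '' cells a b (f ⊓ f') (g ⊓ g') := by
  by_contra hd
  obtain ⟨hf, -, -, hS⟩ := weakAlign_iff.1 h
  obtain ⟨hf', -, -, hS'⟩ := weakAlign_iff.1 h'
  have hocc_d : d ∈ Prod.snd '' cells a b f g :=
    hS.mem_image_of_le d.le_succ (mem_image_snd_cells_of_inf hS hocc)
  rw [inf_comm f, inf_comm g] at hocc
  have hocc_d' : d ∈ Prod.snd '' cells a b f' g' :=
    hS'.mem_image_of_le d.le_succ (mem_image_snd_cells_of_inf hS' hocc)
  rcases mem_image_snd_cells.1 hocc_d' with ⟨p', hp'⟩ | ⟨q, hq⟩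
  · rcases mem_image_snd_cells.1 hocc_d with ⟨p, hp⟩ | ⟨q, hq⟩
    · simp only [mem_image_snd_cells, Pi.inf_apply, not_or, not_exists] at hd
      have := hd.1 p; have := hd.1 p'
      have := hf.lt_iff_lt.1 (show f p' < f p by omega)
      have := hf'.lt_iff_lt.1 (show f' p < f' p' by omega)
      exact lt_asymm ‹p < p'› ‹p' < p›
    · rw [inf_comm f, inf_comm g] at hd
      exact ne_of_notMem_image_snd_cells_inf hb h' h hd hocc_d' q hq
  · exact ne_of_notMem_image_snd_cells_inf hb h h' hd hocc_d q hq

theorem inf (ha : StrictMono a) (hb : StrictMono b) (h : WeakAlign a b f g)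
    (h' : WeakAlign a b f' g') : WeakAlign a b (f ⊓ f') (g ⊓ g') := by
  obtain ⟨hf, hg, hba, hS⟩ := weakAlign_iff.1 h
  obtain ⟨hf', hg', hba', hS'⟩ := weakAlign_iff.1 h'
  refine weakAlign_iff.2 ⟨hf.inf hf', hg.inf hg', fun i j hji => ?_,
    ⟨mem_image_snd_cells_inf_of_succ hb h h',
      exists_gt_mem_cells_inf ha hb hf hf' hg hg' hS hS'⟩⟩
  exact lt_inf_iff.2 ⟨inf_le_left.trans_lt (hba i j hji), inf_le_right.trans_lt (hba' i j hji)⟩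

lemma snoc_left (h : WeakAlign a b f g) (hcols : Prod.snd '' cells a b f g = Iio K) {x : P}
    (hax : ∀ i, a i < x) (hbx : ∀ j, b j < x) :
    WeakAlign (Fin.snoc a x : Fin (m + 1) → P) b (Fin.snoc f K : Fin (m + 1) → ℕ) g ∧
      Prod.snd '' cells (Fin.snoc a x : Fin (m + 1) → P) b
        (Fin.snoc f K : Fin (m + 1) → ℕ) g = Iio (K + 1) := by
  obtain ⟨hf, hg, hba, hS⟩ := weakAlign_iff.1 h
  obtain ⟨hfK, hgK⟩ := lt_of_image_snd_cells_eq hcols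
  rw [weakAlign_iff, cells_snoc_left]
  refine ⟨⟨Fin.strictMono_snoc hf hfK, hg, fun i j hji => ?_, ?_⟩,
    image_snd_union_prod_singleton hcols (singleton_nonempty x)⟩
  · induction i using Fin.lastCases with
    | last => simpa using hgK j
    | cast i => simpa using hba i j (by simpa using hji)
  · refine hS.union_prod_singleton hcols fun z c hz _ => ⟨x, rfl, ?_⟩
    rcases mem_cells.1 hz with ⟨i, rfl, -⟩ | ⟨j, rfl, -⟩
    exacts [hax i, hbx j]

lemma snoc (h : WeakAlign a b f g) (hcols : Prod.snd '' cells a b f g = Iio K) {x y : P}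
    (hax : ∀ i, a i < x) (hby : ∀ j, b j < y) (hyx : ¬ y < x) :
    WeakAlign (Fin.snoc a x : Fin (m + 1) → P) (Fin.snoc b y : Fin (n + 1) → P)
        (Fin.snoc f K : Fin (m + 1) → ℕ) (Fin.snoc g K : Fin (n + 1) → ℕ) ∧
      Prod.snd '' cells (Fin.snoc a x : Fin (m + 1) → P) (Fin.snoc b y : Fin (n + 1) → P)
        (Fin.snoc f K : Fin (m + 1) → ℕ) (Fin.snoc g K : Fin (n + 1) → ℕ) =
        Iio (K + 1) := by
  obtain ⟨hf, hg, hba, hS⟩ := weakAlign_iff.1 h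
  obtain ⟨hfK, hgK⟩ := lt_of_image_snd_cells_eq hcols
  rw [weakAlign_iff, cells_snoc]
  refine ⟨⟨Fin.strictMono_snoc hf hfK, Fin.strictMono_snoc hg hgK, fun i j hji => ?_, ?_⟩,
    image_snd_union_prod_singleton hcols (insert_nonempty x {y})⟩
  · induction i using Fin.lastCases with
    | last =>
      induction j using Fin.lastCases with
      | last => exact absurd (by simpa using hji) hyx
      | cast j => simpa using hgK j
    | cast i =>
      induction j using Fin.lastCases with
      | last => exact absurd ((by simpa using hji : y < a i).trans (hax i)) hyx
      | cast j => simpa using hba i j (by simpa using hji)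
  · refine hS.union_prod_singleton hcols fun z c hz _ => ?_
    rcases mem_cells.1 hz with ⟨i, rfl, -⟩ | ⟨j, rfl, -⟩
    exacts [⟨x, mem_insert x {y}, hax i⟩, ⟨y, mem_insert_of_mem x rfl, hby j⟩]

lemma of_empty_left (a : Fin 0 → P) (hb : StrictMono b) :
    WeakAlign a b Fin.elim0 Fin.val ∧ Prod.snd '' cells a b Fin.elim0 Fin.val = Iio n := by
  have hcols : Prod.snd '' cells a b Fin.elim0 Fin.val = Iio n := by
    ext c
    simp only [mem_image_snd_cells, IsEmpty.exists_iff, false_or, mem_Iio]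
    exact ⟨fun ⟨j, hj⟩ => hj ▸ j.isLt, fun hc => ⟨⟨c, hc⟩, rfl⟩⟩
  refine ⟨weakAlign_iff.2 ⟨fun i => i.elim0, Fin.val_strictMono, fun i => i.elim0,
    fun c hc => ?_, fun x c hx hc => ?_⟩, hcols⟩
  · rw [hcols, mem_Iio] at hc ⊢
    exact Nat.lt_of_succ_lt hc
  · rcases mem_cells.1 hx with ⟨i, -⟩ | ⟨j, rfl, rfl⟩
    · exact i.elim0
    rw [hcols, mem_Iio] at hc
    exact ⟨b ⟨j + 1, hc⟩, mem_cells.2 (Or.inr ⟨_, rfl, rfl⟩), hb (Nat.lt_succ_self j)⟩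

theorem exists_of_strictMono : ∀ {m n : ℕ} {a : Fin m → P} {b : Fin n → P},
    StrictMono a → StrictMono b →
    ∃ f g K, WeakAlign a b f g ∧ Prod.snd '' cells a b f g = Iio K
  | 0, _, a, _, _, hb => ⟨_, _, _, of_empty_left a hb⟩
  | m + 1, n, a, b, ha, hb => by
    have hax : ∀ i, Fin.init a i < a (Fin.last m) := fun i => ha (Fin.castSucc_lt_last i)
    rw [← Fin.snoc_init_self a]
    by_cases hbx : ∀ j, b j < a (Fin.last m)
    · obtain ⟨f, g, K, h, hcols⟩ := exists_of_strictMono (ha.comp Fin.strictMono_castSucc) hb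
      exact ⟨_, _, _, h.snoc_left hcols hax hbx⟩
    obtain _ | n := n
    · exact absurd finZeroElim hbx
    have hyx : ¬ b (Fin.last n) < a (Fin.last m) := fun hlt =>
      hbx fun j => (hb.monotone (Fin.le_last j)).trans_lt hlt
    rw [← Fin.snoc_init_self b]
    obtain ⟨f, g, K, h, hcols⟩ := exists_of_strictMono (ha.comp Fin.strictMono_castSucc)
      (hb.comp Fin.strictMono_castSucc)
    exact ⟨_, _, _, h.snoc hcols hax (fun j => hb (Fin.castSucc_lt_last j)) hyx⟩

end WeakAlign

theorem stmt_11_general {P : Type*} [PartialOrder P]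
    {m n : ℕ} (a : Fin m → P) (b : Fin n → P) (ha : StrictMono a) (hb : StrictMono b) :
    (∃ φ : (Fin m → ℕ) × (Fin n → ℕ), WeakAlign a b φ.1 φ.2) ∧
    (∃! φ : (Fin m → ℕ) × (Fin n → ℕ), WeakAlign a b φ.1 φ.2 ∧
      ∀ ψ : (Fin m → ℕ) × (Fin n → ℕ), WeakAlign a b ψ.1 ψ.2 →
        (∀ i, φ.1 i ≤ ψ.1 i) ∧ (∀ j, φ.2 j ≤ ψ.2 j)) := by
  let S : Set ((Fin m → ℕ) × (Fin n → ℕ)) := {φ | WeakAlign a b φ.1 φ.2}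
  have hne : S.Nonempty :=
    let ⟨f, g, _, h, _⟩ := WeakAlign.exists_of_strictMono ha hb
    ⟨(f, g), h⟩
  have hS : InfClosed S := fun _ hφ _ hψ => hφ.inf ha hb hψ
  obtain ⟨φ, hφ⟩ := hS.exists_isLeast hne
  exact ⟨hne, φ, hφ, fun ψ hψ => IsLeast.unique (s := S) hψ hφ⟩

/-- For a (3+1)-free poset and rows given by disjoint chains, weak `r` alignments exist
and there is a unique minimal one with respect to the columnwise order. -/
theorem stmt_11 {P : Type*} [PartialOrder P] [Fintype P] (h31 : ThreePlusOneFree P)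
    {m n : ℕ} (a : Fin m → P) (b : Fin n → P) (ha : StrictMono a) (hb : StrictMono b)
    (hdisj : ∀ i j, a i ≠ b j) :
    (∃ φ : (Fin m → ℕ) × (Fin n → ℕ), WeakAlign a b φ.1 φ.2) ∧
    (∃! φ : (Fin m → ℕ) × (Fin n → ℕ), WeakAlign a b φ.1 φ.2 ∧
      ∀ ψ : (Fin m → ℕ) × (Fin n → ℕ), WeakAlign a b ψ.1 ψ.2 →
        (∀ i, φ.1 i ≤ ψ.1 i) ∧ (∀ j, φ.2 j ≤ ψ.2 j)) :=
  stmt_11_general a b ha hb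
end

section
/- Let P be a finite (3+1)-free poset and A a P-array. In the r alignment of A, any element of row r+1 that does not share a column with an element of row r lies in a column strictly to the left of any element of row r that does not share a column with an element of row r+1. -/
/-- Auxiliary: if `c < d`, column `d` has a `b` but no `a`, column `c` has an `a` but no
`b`, and every column strictly between has both, then shifting every `a` in columns right
of `d` and every `b` in columns right of `c` one step left again gives a weak alignment. -/
theorem shift_weakAlign {P : Type*} [PartialOrder P] {m n : ℕ}
    (a : Fin m → P) (b : Fin n → P) (ha : StrictMono a) (hb : StrictMono b)
    (φa : Fin m → ℕ) (φb : Fin n → ℕ) (hφ : WeakAlign a b φa φb)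
    (c d : ℕ) (hcd : c < d)
    (had : ∀ i, φa i ≠ d) (hbc : ∀ j, φb j ≠ c)
    (jd : Fin n) (hjd : φb jd = d) (ic : Fin m) (hic : φa ic = c)
    (hstruct : ∀ u, c < u → u < d → (∃ i, φa i = u) ∧ (∃ j, φb j = u)) :
    WeakAlign a b (fun i => if φa i < d then φa i else φa i - 1)
      (fun j => if φb j < c then φb j else φb j - 1) := by
  obtain ⟨hma, hmb, hc2, hc3, hc4a, hc4b⟩ := hφ
  have hchainA : ∀ i i' : Fin m, φa i < φa i' → a i < a i' :=
    fun i i' h => ha (hma.lt_iff_lt.mp h)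
  have hchainB : ∀ j j' : Fin n, φb j < φb j' → b j < b j' :=
    fun j j' h => hb (hmb.lt_iff_lt.mp h)
  set ψA : Fin m → ℕ := fun i => if φa i < d then φa i else φa i - 1 with hψA
  set ψB : Fin n → ℕ := fun j => if φb j < c then φb j else φb j - 1 with hψB
  have hvA : ∀ i, (φa i < d ∧ ψA i = φa i) ∨ (d < φa i ∧ ψA i = φa i - 1) := by
    intro i
    by_cases h : φa i < d
    · exact Or.inl ⟨h, if_pos h⟩
    · have := had i
      exact Or.inr ⟨by omega, if_neg h⟩
  have hvB : ∀ j, (φb j < c ∧ ψB j = φb j) ∨ (c < φb j ∧ ψB j = φb j - 1) := by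
    intro j
    by_cases h : φb j < c
    · exact Or.inl ⟨h, if_pos h⟩
    · have := hbc j
      exact Or.inr ⟨by omega, if_neg h⟩
  refine ⟨?_, ?_, ?_, ?_, ?_, ?_⟩
  · -- strict mono of ψA
    intro i i' h
    have h1 := hma h
    have h2 := had i
    have h3 := had i'
    rcases hvA i with ⟨x1, y1⟩ | ⟨x1, y1⟩ <;> rcases hvA i' with ⟨x2, y2⟩ | ⟨x2, y2⟩ <;> omega
  · -- strict mono of ψB
    intro j j' h
    have h1 := hmb h
    have h2 := hbc j
    have h3 := hbc j'
    rcases hvB j with ⟨x1, y1⟩ | ⟨x1, y1⟩ <;> rcases hvB j' with ⟨x2, y2⟩ | ⟨x2, y2⟩ <;> omega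
  · -- no gaps
    intro u hu hocc
    rcases hocc with ⟨i, hi⟩ | ⟨j, hj⟩
    · rcases hvA i with ⟨h1, h2⟩ | ⟨h1, h2⟩
      · have hu1 : φa i = u := by omega
        have hold := hc2 u hu (Or.inl ⟨i, hu1⟩)
        rcases hold with ⟨i', hi'⟩ | ⟨j', hj'⟩
        · exact Or.inl ⟨i', by rcases hvA i' with ⟨x, y⟩ | ⟨x, y⟩ <;> omega⟩
        · by_cases hjc : φb j' < c
          · exact Or.inr ⟨j', by rcases hvB j' with ⟨x, y⟩ | ⟨x, y⟩ <;> omega⟩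
          · have hcu : c < u - 1 := by have := hbc j'; omega
            obtain ⟨⟨i'', hi''⟩, -⟩ := hstruct (u-1) hcu (by omega)
            exact Or.inl ⟨i'', by rcases hvA i'' with ⟨x, y⟩ | ⟨x, y⟩ <;> omega⟩
      · have hu1 : φa i = u + 1 := by omega
        have hud : d ≤ u := by omega
        have hold : (∃ i', φa i' = u) ∨ (∃ j', φb j' = u) := by
          simpa using hc2 (u+1) (by omega) (Or.inl ⟨i, hu1⟩)
        rcases hold with ⟨i'', hi''⟩ | ⟨j'', hj''⟩
        · have := had i''
          exact Or.inl ⟨i'', by rcases hvA i'' with ⟨x, y⟩ | ⟨x, y⟩ <;> omega⟩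
        · exact Or.inr ⟨j'', by rcases hvB j'' with ⟨x, y⟩ | ⟨x, y⟩ <;> omega⟩
    · rcases hvB j with ⟨h1, h2⟩ | ⟨h1, h2⟩
      · have hu1 : φb j = u := by omega
        have hold := hc2 u hu (Or.inr ⟨j, hu1⟩)
        rcases hold with ⟨i', hi'⟩ | ⟨j', hj'⟩
        · exact Or.inl ⟨i', by rcases hvA i' with ⟨x, y⟩ | ⟨x, y⟩ <;> omega⟩
        · exact Or.inr ⟨j', by rcases hvB j' with ⟨x, y⟩ | ⟨x, y⟩ <;> omega⟩
      · have hu1 : φb j = u + 1 := by omega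
        by_cases hcu : u = c
        · have hold := hc2 u hu (Or.inl ⟨ic, by omega⟩)
          rcases hold with ⟨i', hi'⟩ | ⟨j', hj'⟩
          · exact Or.inl ⟨i', by rcases hvA i' with ⟨x, y⟩ | ⟨x, y⟩ <;> omega⟩
          · exact Or.inr ⟨j', by rcases hvB j' with ⟨x, y⟩ | ⟨x, y⟩ <;> omega⟩
        · have hcu2 : c < u := by omega
          have hOccu : (∃ i', φa i' = u) ∨ (∃ j', φb j' = u) := by
            simpa using hc2 (u+1) (by omega) (Or.inr ⟨j, hu1⟩)
          rcases hOccu with ⟨i', hi'⟩ | ⟨j', hj'⟩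
          · have hid := had i'
            by_cases hud : φa i' < d
            · by_cases huc : u - 1 = c
              · exact Or.inl ⟨ic, by rcases hvA ic with ⟨x, y⟩ | ⟨x, y⟩ <;> omega⟩
              · obtain ⟨⟨i'', hi''⟩, -⟩ := hstruct (u-1) (by omega) (by omega)
                exact Or.inl ⟨i'', by rcases hvA i'' with ⟨x, y⟩ | ⟨x, y⟩ <;> omega⟩
            · exact Or.inl ⟨i', by rcases hvA i' with ⟨x, y⟩ | ⟨x, y⟩ <;> omega⟩
          · exact Or.inr ⟨j', by rcases hvB j' with ⟨x, y⟩ | ⟨x, y⟩ <;> omega⟩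
  · -- order condition between rows
    intro i j hba
    have h1 := hc3 i j hba
    have h2 := had i
    have h3 := hbc j
    rcases hvA i with ⟨x1, y1⟩ | ⟨x1, y1⟩ <;> rcases hvB j with ⟨x2, y2⟩ | ⟨x2, y2⟩ <;> omega
  · -- chain condition for row r
    intro i hocc
    rcases hvA i with ⟨h1, h2⟩ | ⟨h1, h2⟩
    · by_cases hsub : φa i + 1 < d
      · have hold : (∃ i', φa i' = φa i + 1) ∨ (∃ j', φb j' = φa i + 1) := by
          rcases hocc with ⟨i', hi'⟩ | ⟨j', hj'⟩
          · rcases hvA i' with ⟨x, y⟩ | ⟨x, y⟩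
            · exact Or.inl ⟨i', by omega⟩
            · exfalso; omega
          · rcases hvB j' with ⟨x, y⟩ | ⟨x, y⟩
            · exact Or.inr ⟨j', by omega⟩
            · have hx : φb j' = φa i + 2 := by omega
              simpa using hc2 (φa i + 2) (by omega) (Or.inr ⟨j', hx⟩)
        have hres := hc4a i hold
        clear hocc hold
        rcases hres with ⟨i', hi', hlt⟩ | ⟨j', hj', hlt⟩
        · exact Or.inl ⟨i', by rcases hvA i' with ⟨x, y⟩ | ⟨x, y⟩ <;> omega, hlt⟩
        · by_cases hjc : φb j' < c
          · exact Or.inr ⟨j', by rcases hvB j' with ⟨x, y⟩ | ⟨x, y⟩ <;> omega, hlt⟩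
          · have hcx : c < φa i + 1 := by have := hbc j'; omega
            obtain ⟨⟨i'', hi''⟩, -⟩ := hstruct (φa i + 1) hcx hsub
            exact Or.inl ⟨i'', by rcases hvA i'' with ⟨x, y⟩ | ⟨x, y⟩ <;> omega,
              hchainA i i'' (by omega)⟩
      · have hsubeq : φa i + 1 = d := by omega
        have hres := hc4a i (Or.inr ⟨jd, by omega⟩)
        rcases hres with ⟨i', hi', -⟩ | ⟨j', hj', hlt⟩
        · exfalso; exact had i' (by omega)
        · have hold : (∃ i'', φa i'' = d + 1) ∨ (∃ j'', φb j'' = d + 1) := by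
            rcases hocc with ⟨i'', hi''⟩ | ⟨j'', hj''⟩
            · rcases hvA i'' with ⟨x, y⟩ | ⟨x, y⟩
              · exfalso; exact had i'' (by omega)
              · exact Or.inl ⟨i'', by omega⟩
            · rcases hvB j'' with ⟨x, y⟩ | ⟨x, y⟩
              · exfalso; omega
              · exact Or.inr ⟨j'', by omega⟩
          have hres2 := hc4b j' (by
            rcases hold with ⟨i'', hi''⟩ | ⟨j'', hj''⟩
            · exact Or.inl ⟨i'', by omega⟩
            · exact Or.inr ⟨j'', by omega⟩)
          clear hocc hold
          rcases hres2 with ⟨i'', hi'', hlt2⟩ | ⟨j'', hj'', hlt2⟩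
          · exact Or.inl ⟨i'', by rcases hvA i'' with ⟨x, y⟩ | ⟨x, y⟩ <;> omega,
              lt_trans hlt hlt2⟩
          · exact Or.inr ⟨j'', by rcases hvB j'' with ⟨x, y⟩ | ⟨x, y⟩ <;> omega,
              lt_trans hlt hlt2⟩
    · have hold : (∃ i', φa i' = φa i + 1) ∨ (∃ j', φb j' = φa i + 1) := by
        rcases hocc with ⟨i', hi'⟩ | ⟨j', hj'⟩
        · rcases hvA i' with ⟨x, y⟩ | ⟨x, y⟩
          · exfalso; omega
          · exact Or.inl ⟨i', by omega⟩
        · rcases hvB j' with ⟨x, y⟩ | ⟨x, y⟩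
          · exfalso; omega
          · exact Or.inr ⟨j', by omega⟩
      have hres := hc4a i hold
      clear hocc hold
      rcases hres with ⟨i', hi', hlt⟩ | ⟨j', hj', hlt⟩
      · exact Or.inl ⟨i', by rcases hvA i' with ⟨x, y⟩ | ⟨x, y⟩ <;> omega, hlt⟩
      · exact Or.inr ⟨j', by rcases hvB j' with ⟨x, y⟩ | ⟨x, y⟩ <;> omega, hlt⟩
  · -- chain condition for row r+1
    intro j hocc
    rcases hvB j with ⟨h1, h2⟩ | ⟨h1, h2⟩
    · by_cases hsub : φb j + 1 < c
      · have hold : (∃ i', φa i' = φb j + 1) ∨ (∃ j', φb j' = φb j + 1) := by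
          rcases hocc with ⟨i', hi'⟩ | ⟨j', hj'⟩
          · rcases hvA i' with ⟨x, y⟩ | ⟨x, y⟩
            · exact Or.inl ⟨i', by omega⟩
            · exfalso; omega
          · rcases hvB j' with ⟨x, y⟩ | ⟨x, y⟩
            · exact Or.inr ⟨j', by omega⟩
            · exfalso; omega
        have hres := hc4b j hold
        clear hocc hold
        rcases hres with ⟨i', hi', hlt⟩ | ⟨j', hj', hlt⟩
        · exact Or.inl ⟨i', by rcases hvA i' with ⟨x, y⟩ | ⟨x, y⟩ <;> omega, hlt⟩
        · exact Or.inr ⟨j', by rcases hvB j' with ⟨x, y⟩ | ⟨x, y⟩ <;> omega, hlt⟩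
      · have hsubeq : φb j + 1 = c := by omega
        have hres := hc4b j (Or.inl ⟨ic, by omega⟩)
        clear hocc
        rcases hres with ⟨i', hi', hlt⟩ | ⟨j', hj', hlt⟩
        · exact Or.inl ⟨i', by rcases hvA i' with ⟨x, y⟩ | ⟨x, y⟩ <;> omega, hlt⟩
        · exfalso; exact hbc j' (by omega)
    · by_cases hjd2 : φb j < d
      · have hbnext : ∃ j', φb j' = φb j + 1 := by
          by_cases h' : φb j + 1 < d
          · exact (hstruct (φb j + 1) (by omega) h').2
          · exact ⟨jd, by omega⟩
        obtain ⟨j', hj'⟩ := hbnext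
        clear hocc
        exact Or.inr ⟨j', by rcases hvB j' with ⟨x, y⟩ | ⟨x, y⟩ <;> omega,
          hchainB j j' (by omega)⟩
      · have hold : (∃ i', φa i' = φb j + 1) ∨ (∃ j', φb j' = φb j + 1) := by
          rcases hocc with ⟨i', hi'⟩ | ⟨j', hj'⟩
          · rcases hvA i' with ⟨x, y⟩ | ⟨x, y⟩
            · exfalso; omega
            · exact Or.inl ⟨i', by omega⟩
          · rcases hvB j' with ⟨x, y⟩ | ⟨x, y⟩
            · exfalso; omega
            · exact Or.inr ⟨j', by omega⟩
        have hres := hc4b j hold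
        clear hocc hold
        rcases hres with ⟨i', hi', hlt⟩ | ⟨j', hj', hlt⟩
        · exact Or.inl ⟨i', by rcases hvA i' with ⟨x, y⟩ | ⟨x, y⟩ <;> omega, hlt⟩
        · exact Or.inr ⟨j', by rcases hvB j' with ⟨x, y⟩ | ⟨x, y⟩ <;> omega, hlt⟩

/-- In the `r` alignment (the minimal weak `r` alignment), any element of row `r+1` not
sharing a column with an element of row `r` is strictly left of any element of row `r`
not sharing a column with an element of row `r+1`. -/
theorem stmt_12 {P : Type*} [PartialOrder P] [Fintype P] (h31 : ThreePlusOneFree P)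
    {m n : ℕ} (a : Fin m → P) (b : Fin n → P) (ha : StrictMono a) (hb : StrictMono b)
    (hdisj : ∀ i j, a i ≠ b j)
    (φa : Fin m → ℕ) (φb : Fin n → ℕ) (hφ : WeakAlign a b φa φb)
    (hmin : ∀ ψa ψb, WeakAlign a b ψa ψb → (∀ i, φa i ≤ ψa i) ∧ (∀ j, φb j ≤ ψb j)) :
    ∀ j : Fin n, (¬ ∃ i, φa i = φb j) →
      ∀ i : Fin m, (¬ ∃ j', φb j' = φa i) → φb j < φa i := by
  classical
  intro j0 hj0 i0 hi0
  by_contra hcon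
  push_neg at hcon
  -- existence of a "bad" column: a b-only column with an a-only column to its left
  have hex : ∃ e, ((∃ j, φb j = e) ∧ ¬ (∃ i, φa i = e)) ∧
      ∃ c', c' < e ∧ (∃ i, φa i = c') ∧ ¬ (∃ j, φb j = c') := by
    refine ⟨φb j0, ⟨⟨j0, rfl⟩, hj0⟩, φa i0, ?_, ⟨i0, rfl⟩, hi0⟩
    have : φa i0 ≠ φb j0 := fun h => hj0 ⟨i0, h⟩
    omega
  -- minimal bad column d
  have hdex : ∃ dd, (((∃ j, φb j = dd) ∧ ¬ (∃ i, φa i = dd)) ∧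
      ∃ c', c' < dd ∧ (∃ i, φa i = c') ∧ ¬ (∃ j, φb j = c')) ∧
      ∀ e, e < dd → ¬ (((∃ j, φb j = e) ∧ ¬ (∃ i, φa i = e)) ∧
        ∃ c', c' < e ∧ (∃ i, φa i = c') ∧ ¬ (∃ j, φb j = c')) :=
    ⟨Nat.find hex, Nat.find_spec hex, fun e he => Nat.find_min hex he⟩
  obtain ⟨d, ⟨⟨⟨jd, hjd⟩, hnoad⟩, c0, hc0d, hac0⟩, hdmin⟩ := hdex
  clear hex
  -- maximal a-only column c below d
  have hcex : ∃ cc, ((∃ i, φa i = cc) ∧ ¬ (∃ j, φb j = cc)) ∧ cc < d ∧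
      ∀ u, cc < u → u < d → ¬ ((∃ i, φa i = u) ∧ ¬ (∃ j, φb j = u)) := by
    refine ⟨Nat.findGreatest (fun e => (∃ i, φa i = e) ∧ ¬ (∃ j, φb j = e)) (d-1),
      Nat.findGreatest_spec (P := fun e => (∃ i, φa i = e) ∧ ¬ (∃ j, φb j = e))
        (n := d-1) (m := c0) (by omega) hac0, ?_, ?_⟩
    · have := Nat.findGreatest_le
        (P := fun e => (∃ i, φa i = e) ∧ ¬ (∃ j, φb j = e)) (n := d-1)
      omega
    · intro u hu hud
      exact Nat.findGreatest_is_greatest hu (by omega)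
  obtain ⟨c, ⟨⟨ic, hic⟩, hnobc⟩, hcd, hcmax⟩ := hcex
  have had : ∀ i, φa i ≠ d := fun i h => hnoad ⟨i, h⟩
  have hbc : ∀ j, φb j ≠ c := fun j h => hnobc ⟨j, h⟩
  obtain ⟨hma, hmb, hc2, hc3, hc4a, hc4b⟩ := hφ
  -- occupied columns are downward closed
  have hdown : ∀ v, ((∃ i, φa i = v) ∨ (∃ j, φb j = v)) →
      ∀ u, u ≤ v → ((∃ i, φa i = u) ∨ (∃ j, φb j = u)) := by
    intro v
    induction v with
    | zero =>
      intro h u hu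
      have : u = 0 := by omega
      subst this; exact h
    | succ v ih =>
      intro h u hu
      rcases Nat.eq_or_lt_of_le hu with rfl | hlt
      · exact h
      · exact ih (by simpa using hc2 (v+1) (by omega) h) u (by omega)
  -- every column strictly between c and d contains both an a and a b
  have hstruct : ∀ u, c < u → u < d → (∃ i, φa i = u) ∧ (∃ j, φb j = u) := by
    intro u hcu hud
    have hocc : (∃ i, φa i = u) ∨ (∃ j, φb j = u) :=
      hdown d (Or.inr ⟨jd, hjd⟩) u (by omega)
    by_cases hbu : ∃ j, φb j = u
    · by_cases hau : ∃ i, φa i = u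
      · exact ⟨hau, hbu⟩
      · exact absurd ⟨⟨hbu, hau⟩, c, hcu, ⟨ic, hic⟩, hnobc⟩ (hdmin u hud)
    · rcases hocc with hau | hbu'
      · exact absurd ⟨hau, hbu⟩ (hcmax u hcu hud)
      · exact absurd hbu' hbu
  have hW := shift_weakAlign a b ha hb φa φb ⟨hma, hmb, hc2, hc3, hc4a, hc4b⟩
    c d hcd had hbc jd hjd ic hic hstruct
  have hle := (hmin _ _ hW).2 jd
  simp only [hjd] at hle
  rw [if_neg (by omega)] at hle
  omega
end

section
/- Let P be a finite (3+1)-free poset and A a P-array. If the r alignment of A maps a unique element x to some column c, then every element placed strictly left of column c is strictly less than (in ≤_P) every element placed weakly right of column c. -/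
/-- If the `r` alignment (the minimal weak `r` alignment) maps a unique element to
column `c`, then every element strictly left of column `c` is strictly less than every
element weakly right of column `c`. -/
theorem stmt_13 {P : Type*} [PartialOrder P] [Fintype P] (h31 : ThreePlusOneFree P)
    {m n : ℕ} (a : Fin m → P) (b : Fin n → P) (ha : StrictMono a) (hb : StrictMono b)
    (hdisj : ∀ i j, a i ≠ b j)
    (φa : Fin m → ℕ) (φb : Fin n → ℕ) (hφ : WeakAlign a b φa φb)
    (hmin : ∀ ψa ψb, WeakAlign a b ψa ψb → (∀ i, φa i ≤ ψa i) ∧ (∀ j, φb j ≤ ψb j))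
    (c : ℕ) (huniq : ∃! p : Fin m ⊕ Fin n, Sum.elim φa φb p = c) :
    ∀ p q : Fin m ⊕ Fin n, Sum.elim φa φb p < c → c ≤ Sum.elim φa φb q →
      Sum.elim a b p < Sum.elim a b q := by
  classical
  obtain ⟨ma, mb, h2, h3, h4, h5⟩ := hφ
  obtain ⟨x0, hx0, hxu⟩ := huniq
  have mkInc : ∀ v w : P, ¬ v < w → ¬ w < v → v ≠ w → Incomp v w := by
    intro v w h1' h2' h3'
    exact ⟨fun hle => h1' (lt_of_le_of_ne hle h3'),
           fun hle => h2' (lt_of_le_of_ne hle (Ne.symm h3'))⟩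
  -- occupancy
  have occ_of : ∀ (p : Fin m ⊕ Fin n) (g : ℕ), Sum.elim φa φb p = g →
      ((∃ i, φa i = g) ∨ (∃ j, φb j = g)) := by
    rintro (i | j) g h
    · exact Or.inl ⟨i, h⟩
    · exact Or.inr ⟨j, h⟩
  have occ_down : ∀ h g : ℕ, g ≤ h → ((∃ i, φa i = h) ∨ (∃ j, φb j = h)) →
      ((∃ i, φa i = g) ∨ (∃ j, φb j = g)) := by
    intro h
    induction h with
    | zero =>
      intro g hg hh
      rw [Nat.le_zero.mp hg]
      exact hh
    | succ k ih =>
      intro g hg hh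
      rcases Nat.lt_or_ge g (k+1) with hlt | hge
      · have hk := h2 (k+1) (Nat.succ_pos k) hh
        simp only [Nat.add_sub_cancel] at hk
        exact ih g (by omega) hk
      · have hgk : g = k + 1 := by omega
        rw [hgk]; exact hh
  -- the witness step: each element has a larger element in the next occupied column
  have step : ∀ p : Fin m ⊕ Fin n,
      ((∃ i, φa i = Sum.elim φa φb p + 1) ∨ (∃ j, φb j = Sum.elim φa φb p + 1)) →
      ∃ z, Sum.elim φa φb z = Sum.elim φa φb p + 1 ∧ Sum.elim a b p < Sum.elim a b z := by
    rintro (i | j) hocc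
    · rcases h4 i hocc with ⟨i', hh1, hh2⟩ | ⟨j, hh1, hh2⟩
      · exact ⟨Sum.inl i', hh1, hh2⟩
      · exact ⟨Sum.inr j, hh1, hh2⟩
    · rcases h5 j hocc with ⟨i, hh1, hh2⟩ | ⟨j', hh1, hh2⟩
      · exact ⟨Sum.inl i, hh1, hh2⟩
      · exact ⟨Sum.inr j', hh1, hh2⟩
  have upchain : ∀ (d : ℕ) (p : Fin m ⊕ Fin n),
      ((∃ i, φa i = Sum.elim φa φb p + d) ∨ (∃ j, φb j = Sum.elim φa φb p + d)) →
      ∃ z, Sum.elim φa φb z = Sum.elim φa φb p + d ∧ Sum.elim a b p ≤ Sum.elim a b z := by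
    intro d
    induction d with
    | zero => intro p hocc; exact ⟨p, by clear hocc; omega, le_rfl⟩
    | succ k ih =>
      intro p hocc
      obtain ⟨z, hz1, hz2⟩ := ih p (occ_down _ _ (by omega) hocc)
      obtain ⟨z', hz1', hz2'⟩ := step z (by rw [hz1]; exact hocc)
      exact ⟨z', by clear hocc; omega, le_trans hz2 (le_of_lt hz2')⟩
  -- a chain of up to three consecutive elements ending at column c + d, starting above x0
  have triple : ∀ d : ℕ,
      ((∃ i, φa i = c + d) ∨ (∃ j, φb j = c + d)) →
      ∃ z, Sum.elim φa φb z = c + d ∧ Sum.elim a b x0 ≤ Sum.elim a b z ∧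
        (d = 0 ∨ ∃ z', Sum.elim φa φb z' = c + d - 1 ∧
          Sum.elim a b x0 ≤ Sum.elim a b z' ∧ Sum.elim a b z' < Sum.elim a b z ∧
          (d = 1 ∨ ∃ z'', Sum.elim φa φb z'' = c + d - 2 ∧
            Sum.elim a b x0 ≤ Sum.elim a b z'' ∧ Sum.elim a b z'' < Sum.elim a b z')) := by
    intro d
    induction d with
    | zero => intro hocc; exact ⟨x0, by clear hocc; omega, le_rfl, Or.inl rfl⟩
    | succ k ih =>
      intro hocc
      obtain ⟨z, hz1, hz2, hz3⟩ := ih (occ_down _ _ (by omega) hocc)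
      obtain ⟨w, hw1, hw2⟩ := step z (by rw [hz1]; exact hocc)
      refine ⟨w, by clear hocc hz3; omega, le_trans hz2 (le_of_lt hw2),
        Or.inr ⟨z, by clear hocc hz3; omega, hz2, hw2, ?_⟩⟩
      clear hocc
      rcases hz3 with h0 | ⟨z', hz1', hz2', hz3', hz4'⟩
      · exact Or.inl (by omega)
      · clear hz4'
        exact Or.inr ⟨z', by omega, hz2', hz3'⟩
  -- the main lemma
  have main : ∀ e : ℕ, 1 ≤ c → c ≤ e → ∀ q u : Fin m ⊕ Fin n,
      Sum.elim φa φb q = e → Sum.elim φa φb u = c - 1 →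
      Sum.elim a b u < Sum.elim a b q := by
    intro e
    induction e using Nat.strong_induction_on with
    | _ e ih =>
    intro hc1 hce q u hq hu
    obtain ⟨w, hw1, hw2⟩ := step u (by
      have h1 : Sum.elim φa φb u + 1 = c := by omega
      rw [h1]; exact occ_of x0 c hx0)
    have hwx : w = x0 := hxu w (by omega)
    rw [hwx] at hw2
    rcases eq_or_lt_of_le hce with hec | hce'
    · have hqx : q = x0 := hxu q (by omega)
      rw [hqx]; exact hw2
    · -- c < e
      have hkey : c + (e - c) = e := by omega
      obtain ⟨z, hz1, hz2, hz3⟩ := triple (e - c) (by rw [hkey]; exact occ_of q e hq)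
      rw [hkey] at hz1
      rcases hz3 with hd0 | ⟨z', hzc', hzx', hzlt', hrest⟩
      · omega
      have hthird : ∃ t : Fin m ⊕ Fin n, Sum.elim φa φb t < e ∧
          Sum.elim a b t < Sum.elim a b z' ∧ Sum.elim a b u ≤ Sum.elim a b t := by
        rcases hrest with hd1 | ⟨z'', hc'', hx'', hlt''⟩
        · have hz'x : z' = x0 := hxu z' (by omega)
          exact ⟨u, by omega, by rw [hz'x]; exact hw2, le_rfl⟩
        · exact ⟨z'', by omega, hlt'', le_trans (le_of_lt hw2) hx''⟩
      obtain ⟨t, htcol, htz', hut⟩ := hthird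
      clear hrest
      have hzc2 : Sum.elim φa φb z' = e - 1 := by omega
      rcases q with iq | jq
      · -- q in row a
        have hqa : φa iq = e := hq
        show Sum.elim a b u < a iq
        rcases x0 with i0 | j0
        · -- x0 in row a : immediate
          have hx0a : φa i0 = c := hx0
          have hw2' : Sum.elim a b u < a i0 := hw2
          exact hw2'.trans (ha (ma.lt_iff_lt.mp (by omega)))
        · -- x0 = b j0 in row b
          have hx0b : φb j0 = c := hx0
          have hw2' : Sum.elim a b u < b j0 := hw2
          by_cases hx0q : b j0 < a iq
          · exact hw2'.trans hx0q
          rcases z' with i1 | j1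
          · -- z' in row a : immediate
            have hz'a : φa i1 = e - 1 := hzc2
            have hzx1 : b j0 ≤ a i1 := hzx'
            exact lt_of_lt_of_le hw2' (hzx1.trans (le_of_lt (ha (ma.lt_iff_lt.mp (by omega)))))
          · -- z' = b j1
            have hz'b : φb j1 = e - 1 := hzc2
            have hzx1 : b j0 ≤ b j1 := hzx'
            by_cases hbj1 : b j1 < a iq
            · exact (lt_of_lt_of_le hw2' hzx1).trans hbj1
            rcases z with i' | j_e
            · -- z in row a: z = q
              have hza : φa i' = e := hz1
              have hzq : i' = iq := ma.injective (by omega)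
              have hz2' : b j0 ≤ a i' := hz2
              rw [hzq] at hz2'
              exact lt_of_lt_of_le hw2' hz2'
            · -- z = b j_e
              have hzb : φb j_e = e := hz1
              have hzlt1 : b j1 < b j_e := hzlt'
              have hnzq : ¬ b j_e < a iq := fun h => by have := h3 iq j_e h; omega
              by_cases hqz : a iq < b j_e
              · -- the minimality argument
                by_cases hA : ∃ i'', φa i'' = e - 1
                · obtain ⟨i'', hi''⟩ := hA
                  rcases eq_or_lt_of_le (show c ≤ e - 1 by omega) with he1 | he1
                  · have := hxu (Sum.inl i'') (show Sum.elim φa φb (Sum.inl i'') = c from by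
                      show φa i'' = c; omega)
                    exact absurd this (Sum.inl_ne_inr)
                  · have hlt := ih (e-1) (by omega) hc1 (by omega) (Sum.inl i'') u
                      (show Sum.elim φa φb (Sum.inl i'') = e - 1 from hi'') hu
                    have hlt' : Sum.elim a b u < a i'' := hlt
                    exact hlt'.trans (ha (ma.lt_iff_lt.mp (by omega)))
                · exfalso
                  have hnoa : ∀ i, φa i ≠ e - 1 := fun i hi => hA ⟨i, hi⟩
                  set ψ : Fin m → ℕ := Function.update φa iq (e - 1) with hψdef
                  have hupd_self : ψ iq = e - 1 := Function.update_self iq (e-1) φa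
                  have hupd_ne : ∀ i, i ≠ iq → ψ i = φa i :=
                    fun i h => Function.update_of_ne h (e-1) φa
                  have ψocc : ∀ g : ℕ, ((∃ i, ψ i = g) ∨ (∃ j, φb j = g)) →
                      ((∃ i, φa i = g) ∨ (∃ j, φb j = g)) := by
                    rintro g (⟨i, hi⟩ | hbb)
                    · rcases eq_or_ne i iq with rfl | hne
                      · rw [hupd_self] at hi
                        exact Or.inr ⟨j1, by omega⟩
                      · rw [hupd_ne i hne] at hi
                        exact Or.inl ⟨i, hi⟩
                    · exact Or.inr hbb
                  have occψ : ∀ g : ℕ, ((∃ i, φa i = g) ∨ (∃ j, φb j = g)) →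
                      ((∃ i, ψ i = g) ∨ (∃ j, φb j = g)) := by
                    rintro g (⟨i, hi⟩ | hbb)
                    · rcases eq_or_ne i iq with rfl | hne
                      · exact Or.inr ⟨j_e, by omega⟩
                      · exact Or.inl ⟨i, by rw [hupd_ne i hne]; exact hi⟩
                    · exact Or.inr hbb
                  have hP1 : ∀ j', φb j' = e - 1 → ¬ b j' < a iq := by
                    intro j' hj'
                    have hjj : j' = j1 := mb.injective (by omega)
                    rw [hjj]; exact hbj1
                  have wa : WeakAlign a b ψ φb := by
                    refine ⟨?_, mb, ?_, ?_, ?_, ?_⟩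
                    · intro i1' i2' h12
                      rcases eq_or_ne i1' iq with rfl | hne1
                      · rw [hupd_self, hupd_ne i2' (ne_of_gt h12)]
                        have := ma h12
                        omega
                      · rcases eq_or_ne i2' iq with rfl | hne2
                        · rw [hupd_self, hupd_ne i1' hne1]
                          have hh1 := ma h12
                          have hh2 := hnoa i1'
                          omega
                        · rw [hupd_ne i1' hne1, hupd_ne i2' hne2]
                          exact ma h12
                    · intro g hg hocc
                      exact occψ _ (h2 g hg (ψocc _ hocc))
                    · intro i j hlt
                      rcases eq_or_ne i iq with rfl | hne
                      · rw [hupd_self]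
                        have ha1 := h3 _ j hlt
                        have ha2 : φb j ≠ e - 1 := fun hj => hP1 j hj hlt
                        omega
                      · rw [hupd_ne i hne]
                        exact h3 i j hlt
                    · intro i hocc
                      rcases eq_or_ne i iq with rfl | hne
                      · refine Or.inr ⟨j_e, ?_, hqz⟩
                        rw [hupd_self]; clear hocc; omega
                      · rw [hupd_ne i hne] at hocc ⊢
                        rcases h4 i (ψocc _ hocc) with ⟨i', hi1, hi2⟩ | hbw
                        · have hne' : i' ≠ iq := by
                            rintro rfl
                            exact hnoa i (by clear hocc; omega)
                          exact Or.inl ⟨i', by rw [hupd_ne i' hne']; exact hi1, hi2⟩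
                        · exact Or.inr hbw
                    · intro j hocc
                      rcases h5 j (ψocc _ hocc) with ⟨i, hi1, hi2⟩ | hbw
                      · rcases eq_or_ne i iq with rfl | hne
                        · exact absurd hi2 (hP1 j (by clear hocc; omega))
                        · exact Or.inl ⟨i, by rw [hupd_ne i hne]; exact hi1, hi2⟩
                      · exact Or.inr hbw
                  have hle := (hmin ψ φb wa).1 iq
                  rw [hupd_self] at hle
                  omega
              · -- z incomparable to q; use the third element and (3+1)-freeness
                have hqz1 : ¬ a iq < b j1 := fun h => hqz (h.trans hzlt1)
                rcases t with i2 | j2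
                · have hta : φa i2 < e := htcol
                  have hut' : Sum.elim a b u ≤ a i2 := hut
                  exact lt_of_le_of_lt hut' (ha (ma.lt_iff_lt.mp (by omega)))
                · have htz1 : b j2 < b j1 := htz'
                  have hut' : Sum.elim a b u ≤ b j2 := hut
                  by_cases h1 : b j2 < a iq
                  · exact lt_of_le_of_lt hut' h1
                  · have h2' : ¬ a iq < b j2 := fun h => hqz1 (h.trans htz1)
                    exact absurd ⟨b j2, b j1, b j_e, a iq, htz1, hzlt1,
                      mkInc _ _ h2' h1 (hdisj iq j2),
                      mkInc _ _ hqz1 hbj1 (hdisj iq j1),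
                      mkInc _ _ hqz hnzq (hdisj iq j_e)⟩ h31
      · -- q in row b
        have hqb : φb jq = e := hq
        show Sum.elim a b u < b jq
        rcases z' with i1 | j1
        · -- z' in row a
          have hz'a : φa i1 = e - 1 := hzc2
          have hzx1 : Sum.elim a b x0 ≤ a i1 := hzx'
          by_cases hi1 : a i1 < b jq
          · exact (lt_of_lt_of_le hw2 hzx1).trans hi1
          have hqi1 : ¬ b jq < a i1 := fun h => by have := h3 i1 jq h; omega
          rcases z with i' | j'
          · -- z in row a
            have hza : φa i' = e := hz1
            have hz2' : Sum.elim a b x0 ≤ a i' := hz2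
            have hzlt1 : a i1 < a i' := hzlt'
            by_cases hi' : a i' < b jq
            · exact (lt_of_lt_of_le hw2 hz2').trans hi'
            have hqi' : ¬ b jq < a i' := fun h => by have := h3 i' jq h; omega
            rcases t with i2 | j2
            · have hta : φa i2 < e := htcol
              have htz1 : a i2 < a i1 := htz'
              have hut' : Sum.elim a b u ≤ a i2 := hut
              by_cases hi2 : a i2 < b jq
              · exact lt_of_le_of_lt hut' hi2
              have hqi2 : ¬ b jq < a i2 := fun h => by have := h3 i2 jq h; omega
              exact absurd ⟨a i2, a i1, a i', b jq, htz1, hzlt1,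
                mkInc _ _ hqi2 hi2 (Ne.symm (hdisj i2 jq)),
                mkInc _ _ hqi1 hi1 (Ne.symm (hdisj i1 jq)),
                mkInc _ _ hqi' hi' (Ne.symm (hdisj i' jq))⟩ h31
            · have htb : φb j2 < e := htcol
              have hut' : Sum.elim a b u ≤ b j2 := hut
              exact lt_of_le_of_lt hut' (hb (mb.lt_iff_lt.mp (by omega)))
          · -- z = b j' : z = q
            have hzb : φb j' = e := hz1
            have hjj : j' = jq := mb.injective (by omega)
            have hz2' : Sum.elim a b x0 ≤ b j' := hz2
            rw [hjj] at hz2'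
            exact lt_of_lt_of_le hw2 hz2'
        · -- z' in row b : immediate
          have hz'b : φb j1 = e - 1 := hzc2
          have hzx1 : Sum.elim a b x0 ≤ b j1 := hzx'
          exact lt_of_lt_of_le hw2 (hzx1.trans (le_of_lt (hb (mb.lt_iff_lt.mp (by omega)))))
  -- conclude
  intro p q hpc hcq
  have hc1 : 1 ≤ c := by omega
  have hoccc1 : (∃ i, φa i = c - 1) ∨ (∃ j, φb j = c - 1) :=
    occ_down c (c-1) (by omega) (occ_of x0 c hx0)
  have hkey : Sum.elim φa φb p + (c - 1 - Sum.elim φa φb p) = c - 1 := by omega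
  obtain ⟨w, hw1, hw2⟩ := upchain (c - 1 - Sum.elim φa φb p) p (by rw [hkey]; exact hoccc1)
  clear hoccc1
  have hwc : Sum.elim φa φb w = c - 1 := by omega
  exact lt_of_le_of_lt hw2 (main (Sum.elim φa φb q) hc1 hcq q w rfl hwc)
end

section
/- Let P be a finite (3+1)-free poset and T a P-array whose rows r and r+1 are chains a_1 <_P ⋯ <_P a_m and b_1 <_P ⋯ <_P b_n. Then e_r(T) = 0 if and only if m ≥ n and b_i is not <_P a_i for all 1 ≤ i ≤ n. -/
namespace Stmt15Aux

variable {P : Type*} [PartialOrder P] {m n : ℕ}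

def Qset (a : Fin m → P) (b : Fin n → P) (j : ℕ) : Set ℕ :=
  {i | ∃ (hi : i < m) (hj : j < n), b ⟨j, hj⟩ < a ⟨i, hi⟩}

open Classical in
noncomputable def Uf (a : Fin m → P) (b : Fin n → P) (j : ℕ) : ℕ :=
  if (Qset a b j).Nonempty then sInf (Qset a b j) else m

noncomputable def tf (a : Fin m → P) (b : Fin n → P) : ℕ → ℕ
  | 0 => min (m - 1) (Uf a b (n - 1) - 1)
  | k+1 => min (tf a b k - 1) (Uf a b (n - 1 - (k+1)) - 1)

lemma Uf_gt (a : Fin m → P) (b : Fin n → P) (ha : StrictMono a) (hnm : n ≤ m)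
    (hab : ∀ (j : Fin n) (h : (j : ℕ) < m), ¬ b j < a ⟨j, h⟩)
    (j : ℕ) (hj : j < n) : j < Uf a b j := by
  unfold Uf
  split_ifs with h
  · rcases Nat.sInf_mem h with ⟨hi, hj', hlt⟩
    by_contra hle
    push_neg at hle
    have hjm : j < m := lt_of_lt_of_le hj hnm
    have : b ⟨j, hj'⟩ < a ⟨j, hjm⟩ :=
      lt_of_lt_of_le hlt (ha.monotone (Fin.mk_le_mk.mpr hle))
    exact hab ⟨j, hj'⟩ hjm this
  · exact lt_of_lt_of_le hj hnm

lemma tf_bounds (a : Fin m → P) (b : Fin n → P) (ha : StrictMono a) (hnm : n ≤ m)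
    (hab : ∀ (j : Fin n) (h : (j : ℕ) < m), ¬ b j < a ⟨j, h⟩) :
    ∀ k, k < n → n - 1 - k ≤ tf a b k ∧ tf a b k ≤ m - 1 - k := by
  intro k
  induction k with
  | zero =>
    intro hn
    have hU := Uf_gt a b ha hnm hab (n-1) (by omega)
    simp only [tf]
    omega
  | succ k ih =>
    intro hk
    have ihk := ih (by omega)
    have hU := Uf_gt a b ha hnm hab (n - 1 - (k+1)) (by omega)
    simp only [tf]
    omega

lemma tf_succ_lt (a : Fin m → P) (b : Fin n → P) (ha : StrictMono a) (hnm : n ≤ m)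
    (hab : ∀ (j : Fin n) (h : (j : ℕ) < m), ¬ b j < a ⟨j, h⟩)
    (k : ℕ) (hk : k + 1 < n) : tf a b (k+1) < tf a b k := by
  have h1 := tf_bounds a b ha hnm hab k (by omega)
  have h2 : tf a b (k+1) ≤ tf a b k - 1 := by
    simp only [tf]; exact min_le_left _ _
  omega

lemma tf_lt_of (a : Fin m → P) (b : Fin n → P) (ha : StrictMono a) (hnm : n ≤ m)
    (hab : ∀ (j : Fin n) (h : (j : ℕ) < m), ¬ b j < a ⟨j, h⟩) :
    ∀ k l : ℕ, l < k → k < n → tf a b k < tf a b l := by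
  intro k
  induction k with
  | zero => omega
  | succ k ih =>
    intro l hl hk
    rcases Nat.lt_succ_iff_lt_or_eq.mp hl with h' | h'
    · exact lt_trans (tf_succ_lt a b ha hnm hab k hk) (ih l h' (by omega))
    · subst h'; exact tf_succ_lt a b ha hnm hab l hk

lemma tf_le_U (a : Fin m → P) (b : Fin n → P) :
    ∀ j : ℕ, j < n → tf a b (n - 1 - j) ≤ Uf a b j - 1 := by
  intro j hj
  rcases Nat.lt_or_ge j (n-1) with hj' | hj'
  · have hk : n - 1 - j = (n - 2 - j) + 1 := by omega
    rw [hk]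
    simp only [tf]
    have hj2 : n - 1 - (n - 2 - j + 1) = j := by omega
    rw [hj2]
    exact min_le_right _ _
  · have hj0 : n - 1 - j = 0 := by omega
    rw [hj0]
    simp only [tf]
    have : n - 1 = j := by omega
    rw [this]
    exact min_le_right _ _


section ChiWeak

lemma chi_weak {P : Type*} [PartialOrder P] {m n : ℕ} (a : Fin m → P) (b : Fin n → P)
    (ha : StrictMono a) (hb : StrictMono b) (hnm : n ≤ m) (hn : 0 < n)
    (hab : ∀ (j : Fin n) (h : (j : ℕ) < m), ¬ b j < a ⟨j, h⟩) :
    WeakAlign a b (fun i => (i : ℕ)) (fun j => tf a b (n - 1 - (j : ℕ))) := by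
  have hm : 0 < m := lt_of_lt_of_le hn hnm
  have hbd := tf_bounds a b ha hnm hab
  have hocc : ∀ c : ℕ,
      ((∃ i : Fin m, (i : ℕ) = c) ∨ (∃ j : Fin n, tf a b (n - 1 - (j : ℕ)) = c)) → c < m := by
    rintro c (⟨i, hi⟩ | ⟨j, hj⟩)
    · omega
    · have := hbd (n - 1 - (j : ℕ)) (by omega)
      omega
  refine ⟨fun _ _ h => h, ?_, ?_, ?_, ?_, ?_⟩
  · -- StrictMono of σ
    intro j j' hjj
    have hj' : (j' : ℕ) < n := j'.isLt
    exact tf_lt_of a b ha hnm hab (n - 1 - (j : ℕ)) (n - 1 - (j' : ℕ))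
      (by have := Fin.lt_def.mp hjj; omega) (by omega)
  · -- contiguity
    intro c hc hoc
    have hcm := hocc c hoc
    exact Or.inl ⟨⟨c - 1, by omega⟩, rfl⟩
  · -- condition (3)
    intro i j hlt
    dsimp only
    have hne : (Qset a b (j : ℕ)).Nonempty := ⟨(i : ℕ), i.isLt, j.isLt, hlt⟩
    have hU : Uf a b (j : ℕ) = sInf (Qset a b (j : ℕ)) := by
      unfold Uf; rw [if_pos hne]
    have h1 : Uf a b (j : ℕ) ≤ (i : ℕ) := by
      rw [hU]; exact Nat.sInf_le ⟨i.isLt, j.isLt, hlt⟩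
    have h2 := tf_le_U a b (j : ℕ) j.isLt
    have h3 := Uf_gt a b ha hnm hab (j : ℕ) j.isLt
    omega
  · -- condition (4a)
    intro i hoc
    have hcm : (i : ℕ) + 1 < m := hocc _ hoc
    exact Or.inl ⟨⟨(i : ℕ) + 1, hcm⟩, rfl, ha (by simp [Fin.lt_def])⟩
  · -- condition (4b)
    intro j hoc
    dsimp only at hoc ⊢
    rcases Nat.lt_or_ge (j : ℕ) (n - 1) with hjlt | hjge
    · -- j < n - 1
      have hk : n - 1 - (j : ℕ) = (n - 2 - (j : ℕ)) + 1 := by omega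
      set k := n - 2 - (j : ℕ) with hkdef
      have hj2 : n - 1 - (k + 1) = (j : ℕ) := by omega
      have htfeq : tf a b (n - 1 - (j : ℕ)) = min (tf a b k - 1) (Uf a b (j : ℕ) - 1) := by
        rw [hk]; simp only [tf]; rw [hj2]
      have hbk := hbd k (by omega)
      rcases le_total (tf a b k - 1) (Uf a b (j : ℕ) - 1) with hmn | hmn
      · -- next column is b_{j+1}
        right
        refine ⟨⟨(j : ℕ) + 1, by omega⟩, ?_, hb (by simp [Fin.lt_def])⟩
        show tf a b (n - 1 - ((j : ℕ) + 1)) = tf a b (n - 1 - (j : ℕ)) + 1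
        have hthis : n - 1 - ((j : ℕ) + 1) = k := by omega
        rw [hthis, htfeq, min_eq_left hmn]
        omega
      · -- σ j = Uf j - 1
        have hσ : tf a b (n - 1 - (j : ℕ)) = Uf a b (j : ℕ) - 1 := by
          rw [htfeq, min_eq_right hmn]
        by_cases hne : (Qset a b (j : ℕ)).Nonempty
        · left
          have hU : Uf a b (j : ℕ) = sInf (Qset a b (j : ℕ)) := by
            unfold Uf; rw [if_pos hne]
          rcases Nat.sInf_mem hne with ⟨hi, hj', hlt⟩
          have hgt := Uf_gt a b ha hnm hab (j : ℕ) j.isLt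
          refine ⟨⟨sInf (Qset a b (j : ℕ)), hi⟩, ?_, hlt⟩
          show sInf (Qset a b (j : ℕ)) = tf a b (n - 1 - (j : ℕ)) + 1
          omega
        · exfalso
          have hU : Uf a b (j : ℕ) = m := by unfold Uf; rw [if_neg hne]
          have := hbd (n - 1 - (j : ℕ)) (by omega)
          omega
    · -- j = n - 1
      have hjeq : (j : ℕ) = n - 1 := by omega
      have hj0 : n - 1 - (j : ℕ) = 0 := by omega
      have htfeq : tf a b (n - 1 - (j : ℕ)) = min (m - 1) (Uf a b (j : ℕ) - 1) := by
        rw [hj0]; simp only [tf]; rw [hjeq]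
      have hfalse : tf a b (n - 1 - (j : ℕ)) = m - 1 → False := by
        intro hlast
        rcases hoc with ⟨i', hi'⟩ | ⟨j', hj'⟩
        · have := i'.isLt; omega
        · have := hbd (n - 1 - (j' : ℕ)) (by omega)
          omega
      rcases le_total (m - 1) (Uf a b (j : ℕ) - 1) with hmn | hmn
      · exact absurd (by rw [htfeq, min_eq_left hmn]) hfalse
      · by_cases hne : (Qset a b (j : ℕ)).Nonempty
        · left
          have hU : Uf a b (j : ℕ) = sInf (Qset a b (j : ℕ)) := by
            unfold Uf; rw [if_pos hne]
          rcases Nat.sInf_mem hne with ⟨hi, hj', hlt⟩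
          have hgt := Uf_gt a b ha hnm hab (j : ℕ) j.isLt
          refine ⟨⟨sInf (Qset a b (j : ℕ)), hi⟩, ?_, hlt⟩
          show sInf (Qset a b (j : ℕ)) = tf a b (n - 1 - (j : ℕ)) + 1
          rw [htfeq, min_eq_right hmn]
          omega
        · have hU : Uf a b (j : ℕ) = m := by unfold Uf; rw [if_neg hne]
          exact absurd (by rw [htfeq, min_eq_right hmn]; omega) hfalse

end ChiWeak

end Stmt15Aux

/-- With `φ` the `r` alignment (the minimal weak `r` alignment) of rows
`a_1 <_P ⋯ <_P a_m` and `b_1 <_P ⋯ <_P b_n`:  `e_r(T) = 0` (every column with an entry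
of row `r+1` also contains an entry of row `r`) if and only if `m ≥ n` and
`b_i` is not `<_P a_i` for all `i ≤ n`. -/
theorem stmt_15 {P : Type*} [PartialOrder P] [Fintype P] (h31 : ThreePlusOneFree P)
    {m n : ℕ} (a : Fin m → P) (b : Fin n → P) (ha : StrictMono a) (hb : StrictMono b)
    (hdisj : ∀ i j, a i ≠ b j)
    (φa : Fin m → ℕ) (φb : Fin n → ℕ) (hφ : WeakAlign a b φa φb)
    (hmin : ∀ ψa ψb, WeakAlign a b ψa ψb → (∀ i, φa i ≤ ψa i) ∧ (∀ j, φb j ≤ ψb j)) :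
    (∀ j : Fin n, ∃ i : Fin m, φa i = φb j) ↔
      (n ≤ m ∧ ∀ (j : Fin n) (h : (j : ℕ) < m), ¬ b j < a ⟨j, h⟩) := by
  constructor
  · -- forward direction
    intro H
    -- choose the matching
    choose ι hι using H
    have key : ∀ k : ℕ, ∀ hk : k < n, k ≤ (ι ⟨k, hk⟩ : ℕ) := by
      intro k
      induction k with
      | zero => intro hk; exact Nat.zero_le _
      | succ k ih =>
        intro hk
        have hk' : k < n := by omega
        have h1 : ι ⟨k, hk'⟩ < ι ⟨k + 1, hk⟩ := by
          have h2 : φa (ι ⟨k, hk'⟩) < φa (ι ⟨k + 1, hk⟩) := by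
            rw [hι, hι]
            exact hφ.2.1 (show (⟨k, hk'⟩ : Fin n) < ⟨k + 1, hk⟩ by simp [Fin.lt_def])
          exact hφ.1.lt_iff_lt.mp h2
        have h3 := ih hk'
        have h4 := Fin.lt_def.mp h1
        omega
    constructor
    · -- n ≤ m
      rcases Nat.eq_zero_or_pos n with hn | hn
      · omega
      · have h1 := key (n - 1) (by omega)
        have h2 := (ι ⟨n - 1, by omega⟩).isLt
        omega
    · -- no b_j < a_j
      intro j h hlt
      have h3 : φb j < φa ⟨(j : ℕ), h⟩ := hφ.2.2.2.1 _ _ hlt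
      have h4 : φa ⟨(j : ℕ), h⟩ ≤ φa (ι j) := by
        apply hφ.1.monotone
        have hk := key (j : ℕ) j.isLt
        exact Fin.le_def.mpr hk
      rw [hι] at h4
      omega
  · -- backward direction
    rintro ⟨hnm, hab⟩ j
    have hn : 0 < n := j.pos
    have hm : 0 < m := lt_of_lt_of_le hn hnm
    have hχ := Stmt15Aux.chi_weak a b ha hb hnm hn hab
    obtain ⟨h1, h2⟩ := hmin _ _ hχ
    have hge : ∀ k : ℕ, ∀ hk : k < m, k ≤ φa ⟨k, hk⟩ := by
      intro k
      induction k with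
      | zero => intro hk; exact Nat.zero_le _
      | succ k ih =>
        intro hk
        have hk' : k < m := by omega
        have hlt : φa ⟨k, hk'⟩ < φa ⟨k + 1, hk⟩ :=
          hφ.1 (show (⟨k, hk'⟩ : Fin m) < ⟨k + 1, hk⟩ by simp [Fin.lt_def])
        have := ih hk'
        omega
    have hσb := Stmt15Aux.tf_bounds a b ha hnm hab (n - 1 - (j : ℕ)) (by omega)
    have hφbj : φb j < m := by
      have := h2 j
      omega
    refine ⟨⟨φb j, hφbj⟩, ?_⟩
    have hle : φa ⟨φb j, hφbj⟩ ≤ φb j := by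
      have := h1 ⟨φb j, hφbj⟩
      have hv : ((⟨φb j, hφbj⟩ : Fin m) : ℕ) = φb j := rfl
      omega
    have hge' := hge (φb j) hφbj
    have hv : ((⟨φb j, hφbj⟩ : Fin m) : ℕ) = φb j := rfl
    omega
end
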